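/- arXiv:1312.0054 — 12 statements merged into one kernel-verified Lean document; each statement's English description precedes it below -/
import Mathlib

section
/- For every γ > 0 and ε > 0 there exists a unique p > 0 satisfying (1/γ + p)·log(1 + γp) = p + ε. -/
open Real Set

/-- For every `γ > 0` and `ε > 0` there exists a unique `p > 0` satisfying
`(1/γ + p) * log (1 + γ p) = p + ε`. -/
theorem optimal_power_exists_unique (γ ε : ℝ) (hγ : 0 < γ) (hε : 0 < ε) :
    ∃! p : ℝ, 0 < p ∧ (1 / γ + p) * Real.log (1 + γ * p) = p + ε := by
  set f : ℝ → ℝ := fun p => (1 / γ + p) * Real.log (1 + γ * p) - p with hf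
  have hderiv : ∀ p : ℝ, 0 ≤ p → HasDerivAt f (Real.log (1 + γ * p)) p := by
    intro p hp
    have h1 : (0:ℝ) < 1 + γ * p := by positivity
    have hin : HasDerivAt (fun x : ℝ => 1 + γ * x) γ p := by
      simpa using ((hasDerivAt_id p).const_mul γ).const_add (1:ℝ)
    have hlog : HasDerivAt (fun x : ℝ => Real.log (1 + γ * x)) (γ / (1 + γ * p)) p := by
      exact hin.log h1.ne'
    have hadd : HasDerivAt (fun x : ℝ => 1 / γ + x) 1 p := by
      simpa using (hasDerivAt_id p).const_add (1/γ)
    have hmul := (hadd.mul hlog).sub (hasDerivAt_id p)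
    refine hmul.congr_deriv ?_
    field_simp
    ring
  have hcont : ContinuousOn f (Ici 0) := fun p hp =>
    ((hderiv p hp).continuousAt).continuousWithinAt
  have hmono : StrictMonoOn f (Ici 0) := by
    apply strictMonoOn_of_deriv_pos (convex_Ici 0) hcont
    intro x hx
    rw [interior_Ici] at hx
    rw [(hderiv x hx.le).deriv]
    have : (1:ℝ) < 1 + γ * x := by nlinarith [mem_Ioi.mp hx]
    exact Real.log_pos this
  have hf0 : f 0 = 0 := by simp [hf]
  set M : ℝ := max ε (Real.exp 2 / γ) with hM
  have hMε : ε ≤ M := le_max_left _ _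
  have hM0 : 0 ≤ M := le_trans hε.le hMε
  have hlogM : 2 ≤ Real.log (1 + γ * M) := by
    have h2 : Real.exp 2 ≤ γ * M := by
      have := le_max_right ε (Real.exp 2 / γ)
      calc Real.exp 2 = γ * (Real.exp 2 / γ) := by field_simp
        _ ≤ γ * M := by nlinarith
    have h3 : Real.exp 2 ≤ 1 + γ * M := by linarith
    calc (2:ℝ) = Real.log (Real.exp 2) := (Real.log_exp 2).symm
      _ ≤ Real.log (1 + γ * M) := Real.log_le_log (Real.exp_pos 2) h3
  have hfM : ε ≤ f M := by
    have h1 : (0:ℝ) < 1/γ := by positivity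
    have : 2 * M ≤ (1 / γ + M) * Real.log (1 + γ * M) := by nlinarith
    simp only [hf]
    linarith
  obtain ⟨p, hpmem, hpf⟩ := intermediate_value_Icc hM0 (hcont.mono (Icc_subset_Ici_self))
    (show ε ∈ Icc (f 0) (f M) from ⟨by rw [hf0]; exact hε.le, hfM⟩)
  have hppos : 0 < p := by
    rcases lt_or_eq_of_le hpmem.1 with h | h
    · exact h
    · exfalso; rw [← h] at hpf; rw [hf0] at hpf; linarith
  refine ⟨p, ⟨hppos, ?_⟩, ?_⟩
  · have := hpf
    simp only [hf] at this
    linarith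
  · rintro q ⟨hq, hqeq⟩
    have hfq : f q = ε := by simp only [hf]; linarith
    exact hmono.injOn (mem_Ici.mpr hq.le) (mem_Ici.mpr hppos.le) (by rw [hfq, hpf])
end

section
/- The optimal power p*(γ,ε) is strictly decreasing in the channel gain: if 0 < γ₁ < γ₂ and ε > 0, then p*(γ₁,ε) > p*(γ₂,ε). -/
open Real Set

/-- Derivative in γ of `(1/γ + p) * log (1 + γ p)`. -/
lemma aux_hasDerivAt_gamma (p x : ℝ) (hx : 0 < x) (hp : 0 < p) :
    HasDerivAt (fun γ : ℝ => (1/γ + p) * Real.log (1 + γ * p))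
      ((x * p - Real.log (1 + x * p)) / x ^ 2) x := by
  have h1 : (0:ℝ) < 1 + x * p := by positivity
  have hg1 : HasDerivAt (fun γ : ℝ => 1/γ + p) (-(x ^ 2)⁻¹) x := by
    simpa [one_div] using (hasDerivAt_inv hx.ne').add_const p
  have hinner : HasDerivAt (fun γ : ℝ => 1 + γ * p) p x := by
    simpa using ((hasDerivAt_id x).mul_const p).const_add 1
  have hg2 : HasDerivAt (fun γ : ℝ => Real.log (1 + γ * p)) ((1 + x * p)⁻¹ * p) x :=
    by have := hinner.log h1.ne'; rw [div_eq_inv_mul] at this; exact this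
  have := hg1.mul hg2
  refine this.congr_deriv ?_
  have hx0 : x ≠ 0 := hx.ne'
  have h10 : 1 + x * p ≠ 0 := h1.ne'
  field_simp
  ring

/-- Derivative in p of `(1/γ + p) * log (1 + γ p) - p`. -/
lemma aux_hasDerivAt_p (γ x : ℝ) (hγ : 0 < γ) (hx : 0 < x) :
    HasDerivAt (fun p : ℝ => (1/γ + p) * Real.log (1 + γ * p) - p)
      (Real.log (1 + γ * x)) x := by
  have h1 : (0:ℝ) < 1 + γ * x := by positivity
  have hg1 : HasDerivAt (fun p : ℝ => 1/γ + p) 1 x := by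
    simpa using (hasDerivAt_id x).const_add (1/γ)
  have hinner : HasDerivAt (fun p : ℝ => 1 + γ * p) γ x := by
    simpa using ((hasDerivAt_id x).const_mul γ).const_add 1
  have hg2 : HasDerivAt (fun p : ℝ => Real.log (1 + γ * p)) ((1 + γ * x)⁻¹ * γ) x :=
    by have := hinner.log h1.ne'; rw [div_eq_inv_mul] at this; exact this
  have := (hg1.mul hg2).sub (hasDerivAt_id x)
  refine this.congr_deriv ?_
  have hγ0 : γ ≠ 0 := hγ.ne'
  have h10 : 1 + γ * x ≠ 0 := h1.ne'
  field_simp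
  ring

/-- `(1/γ + p) * log (1 + γ p)` is strictly increasing in γ on (0,∞). -/
lemma aux_strictMono_gamma (p : ℝ) (hp : 0 < p) :
    StrictMonoOn (fun γ : ℝ => (1/γ + p) * Real.log (1 + γ * p)) (Ioi 0) := by
  apply strictMonoOn_of_deriv_pos (convex_Ioi 0)
  · apply ContinuousOn.mul
    · exact (continuousOn_inv₀.mono (by intro x hx; exact ne_of_gt hx)).congr
        (fun x hx => by simp [one_div]) |>.add continuousOn_const
    · apply ContinuousOn.log
      · fun_prop
      · intro x hx
        have hx' : (0:ℝ) < x := hx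
        nlinarith
  · intro x hx
    rw [interior_Ioi] at hx
    rw [(aux_hasDerivAt_gamma p x hx hp).deriv]
    have h1 : (0:ℝ) < x * p := mul_pos hx hp
    have hlog : Real.log (1 + x * p) < x * p := by
      have := Real.log_lt_sub_one_of_pos (by linarith : (0:ℝ) < 1 + x * p)
        (by linarith : (1:ℝ) + x * p ≠ 1)
      linarith
    have h2 : 0 < x * p - Real.log (1 + x * p) := by linarith
    exact div_pos h2 (pow_pos hx 2)

/-- `(1/γ + p) * log (1 + γ p) - p` is strictly increasing in p on (0,∞). -/
lemma aux_strictMono_p (γ : ℝ) (hγ : 0 < γ) :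
    StrictMonoOn (fun p : ℝ => (1/γ + p) * Real.log (1 + γ * p) - p) (Ioi 0) := by
  apply strictMonoOn_of_deriv_pos (convex_Ioi 0)
  · apply ContinuousOn.sub _ continuousOn_id
    apply ContinuousOn.mul (by fun_prop)
    apply ContinuousOn.log (by fun_prop)
    intro x hx
    have hx' : (0:ℝ) < x := hx
    nlinarith
  · intro x hx
    rw [interior_Ioi] at hx
    rw [(aux_hasDerivAt_p γ x hγ hx).deriv]
    have : (0:ℝ) < γ * x := mul_pos hγ hx
    exact Real.log_pos (by linarith)

/-- The optimal power `p*(γ,ε)` is strictly decreasing in the channel gain `γ`. -/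
theorem optimal_power_strict_anti (γ₁ γ₂ ε p₁ p₂ : ℝ)
    (hγ₁ : 0 < γ₁) (hγ₁₂ : γ₁ < γ₂) (hε : 0 < ε)
    (hp₁ : 0 < p₁) (he₁ : (1 / γ₁ + p₁) * Real.log (1 + γ₁ * p₁) = p₁ + ε)
    (hp₂ : 0 < p₂) (he₂ : (1 / γ₂ + p₂) * Real.log (1 + γ₂ * p₂) = p₂ + ε) :
    p₁ > p₂ := by
  by_contra h
  push_neg at h
  have hγ₂ : 0 < γ₂ := lt_trans hγ₁ hγ₁₂
  -- monotone in γ: f γ₂ p₁ > f γ₁ p₁ = p₁ + ε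
  have h1 : (1 / γ₁ + p₁) * Real.log (1 + γ₁ * p₁)
      < (1 / γ₂ + p₁) * Real.log (1 + γ₂ * p₁) :=
    aux_strictMono_gamma p₁ hp₁ hγ₁ hγ₂ hγ₁₂
  -- monotone in p: g p₁ ≤ g p₂ where g p = (1/γ₂+p)log(1+γ₂p) - p
  have h2 : (1 / γ₂ + p₁) * Real.log (1 + γ₂ * p₁) - p₁
      ≤ (1 / γ₂ + p₂) * Real.log (1 + γ₂ * p₂) - p₂ := by
    rcases eq_or_lt_of_le h with rfl | hlt
    · exact le_refl _
    · exact le_of_lt (aux_strictMono_p γ₂ hγ₂ (Set.mem_Ioi.mpr hp₁) (Set.mem_Ioi.mpr hp₂) hlt)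
  linarith
end

section
/- Fix γ > 0 and ε > 0. The function f(p) = log(1+γp)/(p+ε) on [0,∞) attains its maximum at p = p*(γ,ε), and this maximizer is unique: for every p ≥ 0 with p ≠ p*(γ,ε), log(1+γp)/(p+ε) < log(1+γ·p*(γ,ε))/(p*(γ,ε)+ε). -/
/-- The energy efficiency `p ↦ log(1+γp)/(p+ε)` on `[0,∞)` attains its maximum at
`p = p*(γ,ε)`, and this maximizer is unique. -/
theorem energy_efficiency_max (γ ε pstar : ℝ) (hγ : 0 < γ) (hε : 0 < ε)
    (hp : 0 < pstar)
    (hpe : (1 / γ + pstar) * Real.log (1 + γ * pstar) = pstar + ε) :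
    (∀ p : ℝ, 0 ≤ p →
      Real.log (1 + γ * p) / (p + ε) ≤ Real.log (1 + γ * pstar) / (pstar + ε)) ∧
    (∀ p : ℝ, 0 ≤ p → p ≠ pstar →
      Real.log (1 + γ * p) / (p + ε) < Real.log (1 + γ * pstar) / (pstar + ε)) := by
  set a : ℝ := 1 + γ * pstar with ha
  have ha1 : 1 < a := by nlinarith
  have ha0 : (0:ℝ) < a := by linarith
  have hps : 0 < pstar + ε := by linarith
  have hkey : a * Real.log a = a - 1 + γ * ε := by
    have h := hpe
    field_simp at h
    linear_combination h
  have hRHS : Real.log a / (pstar + ε) = γ / a := by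
    rw [div_eq_div_iff (ne_of_gt hps) (ne_of_gt ha0)]
    linear_combination hkey
  have main : ∀ p : ℝ, 0 ≤ p → a * Real.log (1 + γ * p) ≤ γ * (p + ε) := by
    intro p hp'
    have hx0 : (0:ℝ) < 1 + γ * p := by nlinarith
    have hdiv : (0:ℝ) < (1 + γ * p) / a := div_pos hx0 ha0
    have hlog := Real.log_le_sub_one_of_pos hdiv
    rw [Real.log_div (ne_of_gt hx0) (ne_of_gt ha0)] at hlog
    have := mul_le_mul_of_nonneg_left hlog (le_of_lt ha0)
    have heq : a * ((1 + γ * p) / a - 1) = 1 + γ * p - a := by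
      field_simp
    nlinarith [hkey, this, heq]
  have mains : ∀ p : ℝ, 0 ≤ p → p ≠ pstar →
      a * Real.log (1 + γ * p) < γ * (p + ε) := by
    intro p hp' hne
    have hx0 : (0:ℝ) < 1 + γ * p := by nlinarith
    have hdiv : (0:ℝ) < (1 + γ * p) / a := div_pos hx0 ha0
    have hne1 : (1 + γ * p) / a ≠ 1 := by
      intro h
      apply hne
      have : 1 + γ * p = a := by
        field_simp at h; linarith
      have : γ * p = γ * pstar := by rw [ha] at this; linarith
      exact mul_left_cancel₀ (ne_of_gt hγ) this
    have hlog := Real.log_lt_sub_one_of_pos hdiv hne1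
    rw [Real.log_div (ne_of_gt hx0) (ne_of_gt ha0)] at hlog
    have := mul_lt_mul_of_pos_left hlog ha0
    have heq : a * ((1 + γ * p) / a - 1) = 1 + γ * p - a := by
      field_simp
    nlinarith [hkey, this, heq]
  constructor
  · intro p hp'
    have hpε : 0 < p + ε := by linarith
    rw [hRHS, div_le_div_iff₀ hpε ha0]
    have := main p hp'
    nlinarith [this]
  · intro p hp' hne
    have hpε : 0 < p + ε := by linarith
    rw [hRHS, div_lt_div_iff₀ hpε ha0]
    have := mains p hp' hne
    nlinarith [this]
end

section
/- Fix γ > 0, ε > 0, E > 0, and let T ≥ E/(p*(γ,ε)+ε). Then for all Θ ∈ [0,T] and p ≥ 0 with Θ·(p+ε) ≤ E, one has (Θ/2)·log(1+γp) ≤ (E/(2(p*(γ,ε)+ε)))·log(1+γ·p*(γ,ε)), and this bound is attained by Θ = E/(p*(γ,ε)+ε) and p = p*(γ,ε). Hence the maximum throughput of a battery-operated transmitter with initial energy E and deadline T ≥ E/(p*(γ,ε)+ε) equals (E/(2(p*(γ,ε)+ε)))·log(1+γ·p*(γ,ε)). -/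
/-- Throughput maximization for a battery-operated transmitter with energy `E`,
deadline `T ≥ E/(p*+ε)`: every feasible `(Θ, p)` delivers at most
`(E/(2(p*+ε))) log(1+γ p*)` nats, the bound is attained by
`Θ = E/(p*+ε)`, `p = p*`, hence the maximum throughput equals this value. -/
theorem throughput_max_long_deadline (γ ε E T pstar : ℝ)
    (hγ : 0 < γ) (hε : 0 < ε) (hE : 0 < E)
    (hp : 0 < pstar)
    (hpe : (1 / γ + pstar) * Real.log (1 + γ * pstar) = pstar + ε)
    (hT : E / (pstar + ε) ≤ T) :
    (∀ Θ p : ℝ, 0 ≤ Θ → Θ ≤ T → 0 ≤ p → Θ * (p + ε) ≤ E →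
      Θ / 2 * Real.log (1 + γ * p)
        ≤ E / (2 * (pstar + ε)) * Real.log (1 + γ * pstar)) ∧
    (0 ≤ E / (pstar + ε) ∧ E / (pstar + ε) ≤ T ∧
      E / (pstar + ε) * (pstar + ε) ≤ E ∧
      (E / (pstar + ε)) / 2 * Real.log (1 + γ * pstar)
        = E / (2 * (pstar + ε)) * Real.log (1 + γ * pstar)) ∧
    IsGreatest {r : ℝ | ∃ Θ p : ℝ, 0 ≤ Θ ∧ Θ ≤ T ∧ 0 ≤ p ∧ Θ * (p + ε) ≤ E ∧
        r = Θ / 2 * Real.log (1 + γ * p)}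
      (E / (2 * (pstar + ε)) * Real.log (1 + γ * pstar)) := by
  have hpε : 0 < pstar + ε := by linarith
  have ha : (0:ℝ) < 1 + γ * pstar := by nlinarith
  set L := Real.log (1 + γ * pstar) with hL
  -- key identity: L * (1 + γ * pstar) = γ * (pstar + ε)
  have hid : L * (1 + γ * pstar) = γ * (pstar + ε) := by
    have := hpe
    field_simp at this
    nlinarith [this]
  have hLpos : 0 < L := by
    have := Real.log_pos (by nlinarith : (1:ℝ) < 1 + γ * pstar)
    exact this
  -- key inequality: for p ≥ 0, log(1+γp) ≤ (L/(pstar+ε)) * (p+ε)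
  have key : ∀ p : ℝ, 0 ≤ p →
      Real.log (1 + γ * p) ≤ L / (pstar + ε) * (p + ε) := by
    intro p hp0
    have hx : (0:ℝ) < 1 + γ * p := by nlinarith
    have h1 : Real.log ((1 + γ * p) / (1 + γ * pstar)) ≤
        (1 + γ * p) / (1 + γ * pstar) - 1 :=
      Real.log_le_sub_one_of_pos (by positivity)
    rw [Real.log_div (ne_of_gt hx) (ne_of_gt ha)] at h1
    have h2 : Real.log (1 + γ * p) ≤ L + ((1 + γ * p) / (1 + γ * pstar) - 1) := by
      linarith
    have h3 : L + ((1 + γ * p) / (1 + γ * pstar) - 1) = L / (pstar + ε) * (p + ε) := by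
      field_simp
      nlinarith [hid]
    linarith [h2, h3.le]
  -- main bound
  have bound : ∀ Θ p : ℝ, 0 ≤ Θ → Θ ≤ T → 0 ≤ p → Θ * (p + ε) ≤ E →
      Θ / 2 * Real.log (1 + γ * p) ≤ E / (2 * (pstar + ε)) * L := by
    intro Θ p hΘ0 hΘT hp0 hfeas
    have h1 : Θ / 2 * Real.log (1 + γ * p) ≤ Θ / 2 * (L / (pstar + ε) * (p + ε)) :=
      mul_le_mul_of_nonneg_left (key p hp0) (by linarith)
    have h2 : Θ / 2 * (L / (pstar + ε) * (p + ε)) = L / (2 * (pstar + ε)) * (Θ * (p + ε)) := by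
      field_simp
    have h3 : L / (2 * (pstar + ε)) * (Θ * (p + ε)) ≤ L / (2 * (pstar + ε)) * E :=
      mul_le_mul_of_nonneg_left hfeas (by positivity)
    calc Θ / 2 * Real.log (1 + γ * p) ≤ L / (2 * (pstar + ε)) * (Θ * (p + ε)) := by
            rw [← h2]; exact h1
      _ ≤ L / (2 * (pstar + ε)) * E := h3
      _ = E / (2 * (pstar + ε)) * L := by ring
  refine ⟨bound, ⟨by positivity, hT, le_of_eq (div_mul_cancel₀ E (ne_of_gt hpε)), by field_simp⟩, ?_⟩
  constructor
  · exact ⟨E / (pstar + ε), pstar, by positivity, hT,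
      le_of_lt hp, le_of_eq (div_mul_cancel₀ E (ne_of_gt hpε)), by rw [hL]; field_simp⟩
  · rintro r ⟨Θ, p, h1, h2, h3, h4, rfl⟩
    exact bound Θ p h1 h2 h3 h4
end

section
/- Fix γ > 0, ε > 0, E > 0. The function g(Θ) = Θ·log(1 + γ·(E/Θ − ε)) is strictly increasing on the interval (0, E/(p*(γ,ε)+ε)). -/
/-- Key inequality: for `p > pstar`, `γ(p+ε)/(1+γp) < log(1+γp)`. -/
lemma key_ineq (γ ε pstar p : ℝ) (hγ : 0 < γ) (hε : 0 < ε) (hp : 0 < pstar)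
    (hpe : (1 / γ + pstar) * Real.log (1 + γ * pstar) = pstar + ε)
    (hpp : pstar < p) :
    γ * (p + ε) / (1 + γ * p) < Real.log (1 + γ * p) := by
  set a := 1 + γ * p with ha_def
  set b := 1 + γ * pstar with hb_def
  have hb : 0 < b := by positivity
  have ha : 0 < a := by nlinarith
  have hba : b < a := by nlinarith
  have hlogb : Real.log b = γ * (pstar + ε) / b := by
    have h : (1 / γ + pstar) = b / γ := by field_simp [hb_def]; ring
    rw [h] at hpe
    field_simp at hpe ⊢
    nlinarith [hpe]
  have h2 : Real.log (b / a) < b / a - 1 :=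
    Real.log_lt_sub_one_of_pos (div_pos hb ha) (by
      intro h
      have : b = a := by field_simp at h; linarith
      linarith)
  have hlogab : Real.log a = Real.log b - Real.log (b / a) := by
    rw [Real.log_div hb.ne' ha.ne']; ring
  have h3 : Real.log b - (b / a - 1) < Real.log a := by
    rw [hlogab]; linarith
  -- suffices : γ(p+ε)/a ≤ log b - (b/a - 1)
  have h4 : γ * (p + ε) / a ≤ Real.log b - (b / a - 1) := by
    rw [hlogb, ← sub_nonneg]
    have key : 0 ≤ γ * (pstar + ε) * a + (a - b) * b - γ * (p + ε) * b := by
      have hid : γ * (pstar + ε) * a + (a - b) * b - γ * (p + ε) * b =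
          γ * γ * (p - pstar) * (ε + pstar) := by
        rw [ha_def, hb_def]; ring
      rw [hid]
      have : 0 < p - pstar := by linarith
      positivity
    have heq : γ * (pstar + ε) / b - (b / a - 1) - γ * (p + ε) / a =
        (γ * (pstar + ε) * a + (a - b) * b - γ * (p + ε) * b) / (a * b) := by
      field_simp
      ring
    rw [heq]
    exact div_nonneg key (by positivity)
  linarith

/-- The function `Θ ↦ Θ log(1 + γ (E/Θ − ε))` is strictly increasing on
`(0, E/(p*(γ,ε)+ε))`. -/
theorem full_depletion_throughput_strictMono (γ ε E pstar : ℝ)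
    (hγ : 0 < γ) (hε : 0 < ε) (hE : 0 < E)
    (hp : 0 < pstar)
    (hpe : (1 / γ + pstar) * Real.log (1 + γ * pstar) = pstar + ε) :
    StrictMonoOn (fun Θ : ℝ => Θ * Real.log (1 + γ * (E / Θ - ε)))
      (Set.Ioo 0 (E / (pstar + ε))) := by
  have hpε : 0 < pstar + ε := by linarith
  -- for x in the interval, E/x - ε > pstar
  have hbig : ∀ x ∈ Set.Ioo (0:ℝ) (E / (pstar + ε)), pstar < E / x - ε := by
    intro x hx
    obtain ⟨hx0, hx1⟩ := hx
    have : pstar + ε < E / x := by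
      rw [lt_div_iff₀ hx0]
      rw [lt_div_iff₀ hpε] at hx1
      nlinarith
    linarith
  have hupos : ∀ x ∈ Set.Ioo (0:ℝ) (E / (pstar + ε)),
      0 < 1 + γ * (E / x - ε) := by
    intro x hx
    have := hbig x hx
    nlinarith
  apply strictMonoOn_of_deriv_pos (convex_Ioo _ _)
  · apply ContinuousOn.mul continuousOn_id
    apply ContinuousOn.log
    · exact (continuousOn_const.add (continuous_const.continuousOn.mul
        ((continuousOn_const.div continuousOn_id (fun x hx => ne_of_gt hx.1)).sub
          continuousOn_const)))
    · intro x hx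
      exact (hupos x hx).ne'
  · rw [interior_Ioo]
    intro x hx
    obtain ⟨hx0, hx1⟩ := hx
    have hu : 0 < 1 + γ * (E / x - ε) := hupos x ⟨hx0, hx1⟩
    have hxne : x ≠ 0 := ne_of_gt hx0
    -- derivative of inner function
    have hinner : HasDerivAt (fun Θ : ℝ => 1 + γ * (E / Θ - ε))
        (γ * (-(E / x ^ 2))) x := by
      have h1 : HasDerivAt (fun Θ : ℝ => E / Θ) (-(E / x ^ 2)) x := by
        have := (hasDerivAt_inv hxne).const_mul E
        simpa [div_eq_mul_inv, mul_comm] using this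
      have h2 : HasDerivAt (fun Θ : ℝ => E / Θ - ε) (-(E / x ^ 2)) x :=
        h1.sub_const ε
      simpa using (h2.const_mul γ).const_add 1
    have hlog : HasDerivAt (fun Θ : ℝ => Real.log (1 + γ * (E / Θ - ε)))
        (γ * (-(E / x ^ 2)) / (1 + γ * (E / x - ε))) x :=
      hinner.log hu.ne'
    have hf : HasDerivAt (fun Θ : ℝ => Θ * Real.log (1 + γ * (E / Θ - ε)))
        (Real.log (1 + γ * (E / x - ε)) +
          x * (γ * (-(E / x ^ 2)) / (1 + γ * (E / x - ε)))) x := by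
      simpa using (hasDerivAt_id x).fun_mul hlog
    rw [hf.deriv]
    set p := E / x - ε with hpdef
    have hpp : pstar < p := hbig x ⟨hx0, hx1⟩
    have hkey := key_ineq γ ε pstar p hγ hε hp hpe hpp
    have hEx : E / x = p + ε := by rw [hpdef]; ring
    have hterm : x * (γ * (-(E / x ^ 2)) / (1 + γ * p)) =
        -(γ * (p + ε) / (1 + γ * p)) := by
      rw [← hEx]
      field_simp
    rw [hterm]
    linarith
end

section
/- Fix γ > 0, ε > 0, E > 0, and let 0 < T < E/(p*(γ,ε)+ε). Then for all Θ ∈ [0,T] and p ≥ 0 with Θ·(p+ε) ≤ E, one has (Θ/2)·log(1+γp) ≤ (T/2)·log(1+γ·(E/T − ε)), and this bound is attained by Θ = T and p = E/T − ε. Hence when the deadline is shorter than E/(p*(γ,ε)+ε), it is optimal to transmit during the whole interval [0,T] at the power that depletes the battery exactly at T. -/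
lemma gq_lemma (γ ε pstar q : ℝ) (hγ : 0 < γ) (hε : 0 < ε) (hp : 0 < pstar)
    (hpe : (1 / γ + pstar) * Real.log (1 + γ * pstar) = pstar + ε)
    (hq : pstar < q) : γ * (q + ε) / (1 + γ * q) < Real.log (1 + γ * q) := by
  have ha : (0:ℝ) < 1 + γ * pstar := by nlinarith
  have hb : (0:ℝ) < 1 + γ * q := by nlinarith
  set P := Real.log (1 + γ * pstar) with hP
  set L := Real.log (1 + γ * q) with hL
  have hPa : P * (1 + γ * pstar) = γ * (pstar + ε) := by
    have h := hpe
    field_simp at h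
    nlinarith [h]
  have hA : Real.log ((1 + γ * pstar) / (1 + γ * q)) ≤ (1 + γ * pstar) / (1 + γ * q) - 1 :=
    Real.log_le_sub_one_of_pos (by positivity)
  rw [Real.log_div ha.ne' hb.ne'] at hA
  have hd : (1 + γ * pstar) / (1 + γ * q) * (1 + γ * q) = 1 + γ * pstar :=
    div_mul_cancel₀ _ hb.ne'
  have hA' : (P - L) * (1 + γ * q) ≤ (1 + γ * pstar) - (1 + γ * q) := by
    nlinarith [mul_le_mul_of_nonneg_right hA hb.le]
  have hPpos : 0 < P := by
    have : 0 < γ * (pstar + ε) := by positivity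
    nlinarith
  rw [div_lt_iff₀ hb]
  nlinarith [mul_pos hPpos (sub_pos.mpr (by nlinarith : (1:ℝ) + γ * pstar < 1 + γ * q))]

lemma mono_f (γ ε E T pstar : ℝ)
    (hγ : 0 < γ) (hε : 0 < ε) (hE : 0 < E)
    (hp : 0 < pstar)
    (hpe : (1 / γ + pstar) * Real.log (1 + γ * pstar) = pstar + ε)
    (hq : pstar < E / T - ε) :
    MonotoneOn (fun x : ℝ => x * Real.log (1 + γ * (E / x - ε))) (Set.Ioc 0 T) := by
  have hqx : ∀ x ∈ Set.Ioc (0:ℝ) T, pstar < E / x - ε := by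
    intro x hx
    have h1 : E / T ≤ E / x := div_le_div_of_nonneg_left hE.le hx.1 hx.2
    linarith
  have hux : ∀ x ∈ Set.Ioc (0:ℝ) T, (0:ℝ) < 1 + γ * (E / x - ε) := by
    intro x hx
    have := hqx x hx
    nlinarith
  apply StrictMonoOn.monotoneOn
  apply strictMonoOn_of_deriv_pos (convex_Ioc 0 T)
  · apply ContinuousOn.mul continuousOn_id
    apply ContinuousOn.log
    · apply ContinuousOn.add continuousOn_const
      apply ContinuousOn.mul continuousOn_const
      apply ContinuousOn.sub _ continuousOn_const
      exact ContinuousOn.div continuousOn_const continuousOn_id (fun x hx => ne_of_gt hx.1)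
    · exact fun x hx => (hux x hx).ne'
  · intro x hx
    rw [interior_Ioc] at hx
    have hx0 : 0 < x := hx.1
    have hxT : x ∈ Set.Ioc (0:ℝ) T := ⟨hx.1, hx.2.le⟩
    have hu0 : (0:ℝ) < 1 + γ * (E / x - ε) := hux x hxT
    have hu : HasDerivAt (fun y : ℝ => 1 + γ * (E / y - ε)) (γ * (-(E / x ^ 2))) x := by
      have h1 : HasDerivAt (fun y : ℝ => E / y) (-(E / x ^ 2)) x := by
        have h := (hasDerivAt_inv hx0.ne').const_mul E
        simpa [div_eq_mul_inv, mul_comm, mul_assoc, neg_mul, mul_neg] using h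
      exact ((h1.sub_const ε).const_mul γ).const_add 1
    have hf : HasDerivAt (fun y : ℝ => y * Real.log (1 + γ * (E / y - ε)))
        (1 * Real.log (1 + γ * (E / x - ε)) + x * (γ * (-(E / x ^ 2)) / (1 + γ * (E / x - ε)))) x :=
      (hasDerivAt_id x).mul (hu.log hu0.ne')
    rw [hf.deriv]
    have hkey := gq_lemma γ ε pstar (E / x - ε) hγ hε hp hpe (hqx x hxT)
    have heq : x * (γ * (-(E / x ^ 2)) / (1 + γ * (E / x - ε)))
        = -(γ * ((E / x - ε) + ε) / (1 + γ * (E / x - ε))) := by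
      have hx2 : x * (E / x ^ 2) = E / x := by
        field_simp
      rw [show (E / x - ε) + ε = E / x by ring, ← hx2]
      ring
    rw [heq]
    linarith

/-- Throughput maximization with a short deadline `0 < T < E/(p*+ε)`: every feasible
`(Θ, p)` delivers at most `(T/2) log(1 + γ(E/T − ε))` nats, the bound is attained by
`Θ = T`, `p = E/T − ε`, hence the maximum throughput equals this value. -/
theorem throughput_max_short_deadline (γ ε E T pstar : ℝ)
    (hγ : 0 < γ) (hε : 0 < ε) (hE : 0 < E)
    (hp : 0 < pstar)
    (hpe : (1 / γ + pstar) * Real.log (1 + γ * pstar) = pstar + ε)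
    (hT0 : 0 < T) (hT : T < E / (pstar + ε)) :
    (∀ Θ p : ℝ, 0 ≤ Θ → Θ ≤ T → 0 ≤ p → Θ * (p + ε) ≤ E →
      Θ / 2 * Real.log (1 + γ * p) ≤ T / 2 * Real.log (1 + γ * (E / T - ε))) ∧
    (0 ≤ E / T - ε ∧ T * ((E / T - ε) + ε) ≤ E ∧
      T / 2 * Real.log (1 + γ * (E / T - ε))
        = T / 2 * Real.log (1 + γ * (E / T - ε))) ∧
    IsGreatest {r : ℝ | ∃ Θ p : ℝ, 0 ≤ Θ ∧ Θ ≤ T ∧ 0 ≤ p ∧ Θ * (p + ε) ≤ E ∧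
        r = Θ / 2 * Real.log (1 + γ * p)}
      (T / 2 * Real.log (1 + γ * (E / T - ε))) := by
  have hpε : (0:ℝ) < pstar + ε := by linarith
  have hTE : T * (pstar + ε) < E := (lt_div_iff₀ hpε).mp hT
  have hq : pstar < E / T - ε := by
    have : pstar + ε < E / T := (lt_div_iff₀ hT0).mpr (by linarith [hTE])
    linarith
  have hq0 : 0 ≤ E / T - ε := by linarith
  have hmono := mono_f γ ε E T pstar hγ hε hE hp hpe hq
  have hmain : ∀ Θ p : ℝ, 0 ≤ Θ → Θ ≤ T → 0 ≤ p → Θ * (p + ε) ≤ E →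
      Θ / 2 * Real.log (1 + γ * p) ≤ T / 2 * Real.log (1 + γ * (E / T - ε)) := by
    intro Θ p hΘ0 hΘT hp0 hfeas
    have hRlog : 0 ≤ Real.log (1 + γ * (E / T - ε)) :=
      Real.log_nonneg (by nlinarith)
    rcases eq_or_lt_of_le hΘ0 with h0 | h0
    · rw [← h0]
      simp
      positivity
    · have hpq : p ≤ E / Θ - ε := by
        rw [le_sub_iff_add_le, le_div_iff₀ h0]
        linarith [hfeas]
      have hlog1 : Real.log (1 + γ * p) ≤ Real.log (1 + γ * (E / Θ - ε)) := by
        apply Real.log_le_log (by nlinarith)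
        nlinarith
      have hstep : Θ * Real.log (1 + γ * (E / Θ - ε)) ≤ T * Real.log (1 + γ * (E / T - ε)) :=
        hmono ⟨h0, hΘT⟩ ⟨hT0, le_refl T⟩ hΘT
      calc Θ / 2 * Real.log (1 + γ * p)
          ≤ Θ / 2 * Real.log (1 + γ * (E / Θ - ε)) := by
            apply mul_le_mul_of_nonneg_left hlog1 (by linarith)
        _ ≤ T / 2 * Real.log (1 + γ * (E / T - ε)) := by linarith
  refine ⟨hmain, ⟨hq0, ?_, rfl⟩, ⟨⟨T, E / T - ε, hT0.le, le_refl T, hq0, ?_, rfl⟩, ?_⟩⟩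
  · have : T * (E / T) = E := mul_div_cancel₀ E hT0.ne' |>.symm ▸ by field_simp
    nlinarith [this]
  · have : T * (E / T) = E := by field_simp
    nlinarith [this]
  · rintro r ⟨Θ, p, h1, h2, h3, h4, rfl⟩
    exact hmain Θ p h1 h2 h3 h4
end

section
/- (Lemma 1, throughput maximization.) Let (α,Θ) be an optimal policy for the throughput maximization problem. Suppose that for some epoch i ∈ {1,...,I−1} and sub-channel k, α_{i,k} > 0, Θ_{i,k} > 0, α_{i+1,k} > 0, Θ_{i+1,k} > 0, and set p_{j,k} = α_{j,k}/Θ_{j,k} for j = i, i+1. If the glue level decreases, i.e., 1/γ_{i,k} + p_{i,k} > 1/γ_{i+1,k} + p_{i+1,k}, then the battery is full at the end of epoch i: Σ_{j=1}^{i+1} E_j − Σ_{j=1}^{i} Σ_{k'=1}^{K} (α_{j,k'} + Θ_{j,k'}·ε) = E_max. If the glue level increases, i.e., 1/γ_{i,k} + p_{i,k} < 1/γ_{i+1,k} + p_{i+1,k}, then the battery is empty at the end of epoch i: Σ_{j=1}^{i} Σ_{k'=1}^{K} (α_{j,k'} + Θ_{j,k'}·ε) = Σ_{j=1}^{i} E_j.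 -/
section Helpers

lemma log_move_core (A0 A1 B0 B1 La Lb d Ta Tb : ℝ)
    (hA0 : 0 < A0) (hA1 : 0 < A1) (hB0 : 0 < B0) (hB1 : 0 < B1)
    (hd : 0 < d) (hLb : 0 < Lb) (hLab : Lb < La) (hTa : 0 < Ta) (hTb : 0 < Tb)
    (mid1 : Ta/2 * ((A0 - A1)/A1) = d/(2*La))
    (mid2 : Tb/2 * ((B1 - B0)/B1) = d/(2*Lb)) :
    Ta/2 * Real.log A0 + Tb/2 * Real.log B0 < Ta/2 * Real.log A1 + Tb/2 * Real.log B1 := by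
  have s1 : Real.log A0 - Real.log A1 ≤ (A0 - A1)/A1 := by
    have h := Real.log_le_sub_one_of_pos (div_pos hA0 hA1)
    rw [Real.log_div hA0.ne' hA1.ne'] at h
    have : A0/A1 - 1 = (A0 - A1)/A1 := by field_simp
    linarith
  have s2 : (B1 - B0)/B1 ≤ Real.log B1 - Real.log B0 := by
    have h := Real.log_le_sub_one_of_pos (div_pos hB0 hB1)
    rw [Real.log_div hB0.ne' hB1.ne'] at h
    have h1 : B0/B1 - 1 = (B0 - B1)/B1 := by field_simp
    have h2 : (B0 - B1)/B1 = -((B1 - B0)/B1) := by ring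
    linarith
  have key : d/(2*La) < d/(2*Lb) :=
    div_lt_div_of_pos_left hd (by positivity) (by linarith)
  have e1 : Ta/2 * (Real.log A0 - Real.log A1) ≤ Ta/2 * ((A0 - A1)/A1) :=
    mul_le_mul_of_nonneg_left s1 (by positivity)
  have e2 : Tb/2 * ((B1 - B0)/B1) ≤ Tb/2 * (Real.log B1 - Real.log B0) :=
    mul_le_mul_of_nonneg_left s2 (by positivity)
  rw [mul_sub] at e1 e2
  linarith

/-- Moving `d > 0` of energy from a slot with strictly larger "glue level" to a slot
with strictly smaller glue level strictly increases the resulting sum of rates. -/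
lemma log_move_gain (ga gb Ta Tb a b d : ℝ)
    (hga : 0 < ga) (hgb : 0 < gb) (hTa : 0 < Ta) (hTb : 0 < Tb)
    (hb : 0 ≤ b) (hd : 0 < d) (hda : d < a)
    (hlt : 1/gb + b/Tb + d/Tb < 1/ga + a/Ta - d/Ta) :
    Ta/2 * Real.log (1 + ga*a/Ta) + Tb/2 * Real.log (1 + gb*b/Tb)
      < Ta/2 * Real.log (1 + ga*(a-d)/Ta) + Tb/2 * Real.log (1 + gb*(b+d)/Tb) := by
  have ha : 0 < a := hd.trans hda
  have had : 0 < a - d := by linarith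
  have hA1 : (0:ℝ) < 1 + ga*(a-d)/Ta := by positivity
  have hLa : (0:ℝ) < 1/ga + (a-d)/Ta := by positivity
  have hLb : (0:ℝ) < 1/gb + (b+d)/Tb := by positivity
  refine log_move_core _ _ _ _ (1/ga + (a-d)/Ta) (1/gb + (b+d)/Tb) d Ta Tb
    (by positivity) hA1 (by positivity) (by positivity) hd hLb ?_ hTa hTb ?_ ?_
  · have e1 : 1/ga + (a-d)/Ta = 1/ga + a/Ta - d/Ta := by ring
    have e2 : 1/gb + (b+d)/Tb = 1/gb + b/Tb + d/Tb := by ring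
    linarith
  · field_simp
    ring
  · field_simp
    ring

/-- Move `σ` of energy onto slot `(i,k)` and take it away from slot `(i+1,k)`. -/
noncomputable def movedPolicy (α : ℕ → ℕ → ℝ) (i k : ℕ) (σ : ℝ) : ℕ → ℕ → ℝ :=
  fun j k' => α j k' + (if j = i then (if k' = k then σ else 0) else 0)
    + (if j = i + 1 then (if k' = k then -σ else 0) else 0)

lemma moved_row_sum (K : ℕ) (α Θ : ℕ → ℕ → ℝ) (ε : ℝ) (i k : ℕ) (σ : ℝ)
    (hk : k ∈ Finset.Icc 1 K) (j : ℕ) :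
    ∑ k' ∈ Finset.Icc 1 K, (movedPolicy α i k σ j k' + Θ j k' * ε)
      = (∑ k' ∈ Finset.Icc 1 K, (α j k' + Θ j k' * ε))
        + (if j = i then σ else 0) + (if j = i + 1 then -σ else 0) := by
  unfold movedPolicy
  by_cases h1 : j = i <;> by_cases h2 : j = i + 1 <;>
    simp [h1, h2, Finset.sum_add_distrib, Finset.sum_ite_eq', hk]
  all_goals ring

lemma moved_cum_sum (K : ℕ) (α Θ : ℕ → ℕ → ℝ) (ε : ℝ) (i k : ℕ) (σ : ℝ)
    (hk : k ∈ Finset.Icc 1 K) (hi1 : 1 ≤ i) (m : ℕ) :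
    ∑ j ∈ Finset.Icc 1 m, ∑ k' ∈ Finset.Icc 1 K, (movedPolicy α i k σ j k' + Θ j k' * ε)
      = (∑ j ∈ Finset.Icc 1 m, ∑ k' ∈ Finset.Icc 1 K, (α j k' + Θ j k' * ε))
        + (if i ≤ m then σ else 0) + (if i + 1 ≤ m then -σ else 0) := by
  simp only [moved_row_sum K α Θ ε i k σ hk]
  rw [Finset.sum_add_distrib, Finset.sum_add_distrib]
  congr 1
  · congr 1
    rw [Finset.sum_ite_eq' (Finset.Icc 1 m) i (fun _ => σ)]
    simp [Finset.mem_Icc, hi1]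
  · rw [Finset.sum_ite_eq' (Finset.Icc 1 m) (i+1) (fun _ => -σ)]
    simp [Finset.mem_Icc]

end Helpers

/-- Feasibility of a throughput-maximization policy `(α, Θ)` (energies and durations,
indexed by epoch `i ∈ {1,…,I}` and sub-channel `k ∈ {1,…,K}`): nonnegativity,
`Θ i k ≤ τ i`, the energy causality constraints and the no-battery-overflow
constraints (with the convention `E (I+1) = 0` imposed as a hypothesis elsewhere). -/
def ThroughputFeasible (I K : ℕ) (τ : ℕ → ℝ) (E : ℕ → ℝ) (Emax ε : ℝ)
    (α Θ : ℕ → ℕ → ℝ) : Prop :=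
  (∀ i ∈ Finset.Icc 1 I, ∀ k ∈ Finset.Icc 1 K,
      0 ≤ α i k ∧ 0 ≤ Θ i k ∧ Θ i k ≤ τ i) ∧
  (∀ i ∈ Finset.Icc 1 I,
      ∑ j ∈ Finset.Icc 1 i, ∑ k ∈ Finset.Icc 1 K, (α j k + Θ j k * ε)
        ≤ ∑ j ∈ Finset.Icc 1 i, E j) ∧
  (∀ i ∈ Finset.Icc 1 I,
      ∑ j ∈ Finset.Icc 1 (i + 1), E j
          - ∑ j ∈ Finset.Icc 1 i, ∑ k ∈ Finset.Icc 1 K, (α j k + Θ j k * ε)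
        ≤ Emax)

/-- The throughput of a policy `(α, Θ)`:
`Σ_i Σ_k (Θ_{i,k}/2) log(1 + γ_{i,k} α_{i,k}/Θ_{i,k})`, a term being `0` when
`Θ_{i,k} = 0`. -/
noncomputable def ThroughputOf (I K : ℕ) (γ : ℕ → ℕ → ℝ) (α Θ : ℕ → ℕ → ℝ) : ℝ :=
  ∑ i ∈ Finset.Icc 1 I, ∑ k ∈ Finset.Icc 1 K,
    (if Θ i k = 0 then 0 else Θ i k / 2 * Real.log (1 + γ i k * α i k / Θ i k))

/-- A policy is optimal for the throughput maximization problem if it is feasible and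
maximizes throughput among feasible policies. -/
def ThroughputOptimal (I K : ℕ) (τ : ℕ → ℝ) (γ : ℕ → ℕ → ℝ) (E : ℕ → ℝ)
    (Emax ε : ℝ) (α Θ : ℕ → ℕ → ℝ) : Prop :=
  ThroughputFeasible I K τ E Emax ε α Θ ∧
  ∀ α' Θ' : ℕ → ℕ → ℝ, ThroughputFeasible I K τ E Emax ε α' Θ' →
    ThroughputOf I K γ α' Θ' ≤ ThroughputOf I K γ α Θ

section Helpers2

/-- Feasibility of the perturbed policy. -/
lemma moved_feasible (I K : ℕ) (τ E : ℕ → ℝ) (Emax ε : ℝ) (α Θ : ℕ → ℕ → ℝ)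
    (hfeas : ThroughputFeasible I K τ E Emax ε α Θ)
    (i k : ℕ) (hi1 : 1 ≤ i) (hk : k ∈ Finset.Icc 1 K) (σ : ℝ)
    (h1 : 0 ≤ α i k + σ) (h2 : 0 ≤ α (i+1) k - σ)
    (h3 : (∑ j ∈ Finset.Icc 1 i, ∑ k' ∈ Finset.Icc 1 K, (α j k' + Θ j k' * ε)) + σ
            ≤ ∑ j ∈ Finset.Icc 1 i, E j)
    (h4 : ∑ j ∈ Finset.Icc 1 (i+1), E j
            - ((∑ j ∈ Finset.Icc 1 i, ∑ k' ∈ Finset.Icc 1 K, (α j k' + Θ j k' * ε)) + σ)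
            ≤ Emax) :
    ThroughputFeasible I K τ E Emax ε (movedPolicy α i k σ) Θ := by
  obtain ⟨hnn, hcaus, hover⟩ := hfeas
  have hne : ¬ (i + 1 = i) := by omega
  refine ⟨?_, ?_, ?_⟩
  · intro j hj k' hk'
    obtain ⟨h0, hΘ0, hΘτ⟩ := hnn j hj k' hk'
    refine ⟨?_, hΘ0, hΘτ⟩
    unfold movedPolicy
    by_cases hji : j = i <;> by_cases hji' : j = i + 1 <;> by_cases hkk : k' = k <;>
      simp_all <;> linarith
  · intro m hm
    rw [moved_cum_sum K α Θ ε i k σ hk hi1 m]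
    by_cases hm1 : i + 1 ≤ m
    · have hm2 : i ≤ m := by omega
      simp only [hm1, hm2, if_true]
      have := hcaus m hm
      linarith
    · by_cases hm2 : i ≤ m
      · have : m = i := by omega
        subst this
        simp only [hm1, hm2, if_true, if_false]
        linarith
      · simp only [hm1, hm2, if_false]
        have := hcaus m hm
        linarith
  · intro m hm
    rw [moved_cum_sum K α Θ ε i k σ hk hi1 m]
    by_cases hm1 : i + 1 ≤ m
    · have hm2 : i ≤ m := by omega
      simp only [hm1, hm2, if_true]
      have := hover m hm
      linarith
    · by_cases hm2 : i ≤ m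
      · have : m = i := by omega
        subst this
        simp only [hm1, hm2, if_true, if_false]
        linarith
      · simp only [hm1, hm2, if_false]
        have := hover m hm
        linarith

/-- Throughput of the perturbed policy. -/
lemma moved_throughput (I K : ℕ) (γ : ℕ → ℕ → ℝ) (α Θ : ℕ → ℕ → ℝ) (i k : ℕ) (σ : ℝ)
    (hi : i ∈ Finset.Icc 1 I) (hi' : i + 1 ∈ Finset.Icc 1 I) (hk : k ∈ Finset.Icc 1 K)
    (hΘ1 : Θ i k ≠ 0) (hΘ2 : Θ (i+1) k ≠ 0) :
    ThroughputOf I K γ (movedPolicy α i k σ) Θ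
      = ThroughputOf I K γ α Θ
        + (Θ i k/2 * Real.log (1 + γ i k * (α i k + σ) / Θ i k)
            - Θ i k/2 * Real.log (1 + γ i k * α i k / Θ i k))
        + (Θ (i+1) k/2 * Real.log (1 + γ (i+1) k * (α (i+1) k - σ) / Θ (i+1) k)
            - Θ (i+1) k/2 * Real.log (1 + γ (i+1) k * α (i+1) k / Θ (i+1) k)) := by
  have hne : ¬ (i + 1 = i) := by omega
  set D1 : ℝ := Θ i k/2 * Real.log (1 + γ i k * (α i k + σ) / Θ i k)
      - Θ i k/2 * Real.log (1 + γ i k * α i k / Θ i k) with hD1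
  set D2 : ℝ := Θ (i+1) k/2 * Real.log (1 + γ (i+1) k * (α (i+1) k - σ) / Θ (i+1) k)
      - Θ (i+1) k/2 * Real.log (1 + γ (i+1) k * α (i+1) k / Θ (i+1) k) with hD2
  have hpt : ∀ j k', (if Θ j k' = 0 then (0:ℝ)
        else Θ j k' / 2 * Real.log (1 + γ j k' * movedPolicy α i k σ j k' / Θ j k'))
      = (if Θ j k' = 0 then 0
          else Θ j k' / 2 * Real.log (1 + γ j k' * α j k' / Θ j k'))
        + (if j = i then (if k' = k then D1 else 0) else 0)
        + (if j = i + 1 then (if k' = k then D2 else 0) else 0) := by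
    intro j k'
    have hne' : ¬ (i = i + 1) := by omega
    unfold movedPolicy
    by_cases hji : j = i
    · by_cases hkk : k' = k
      · simp [hji, hkk, hne', hΘ1, hD1]
      · simp [hji, hkk, hne']
    · by_cases hji' : j = i + 1
      · by_cases hkk : k' = k
        · simp [hji', hkk, hne, hΘ2, hD2]
          ring_nf
        · simp [hji', hkk, hne]
      · simp [hji, hji']
  unfold ThroughputOf
  have hrow : ∀ j, (∑ k' ∈ Finset.Icc 1 K, (if Θ j k' = 0 then (0:ℝ)
        else Θ j k' / 2 * Real.log (1 + γ j k' * movedPolicy α i k σ j k' / Θ j k')))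
      = (∑ k' ∈ Finset.Icc 1 K, (if Θ j k' = 0 then (0:ℝ)
          else Θ j k' / 2 * Real.log (1 + γ j k' * α j k' / Θ j k')))
        + (if j = i then D1 else 0) + (if j = i + 1 then D2 else 0) := by
    intro j
    rw [Finset.sum_congr rfl (fun k' _ => hpt j k'), Finset.sum_add_distrib,
      Finset.sum_add_distrib]
    congr 1
    · congr 1
      by_cases hji : j = i <;>
        simp [hji, Finset.sum_ite_eq', hk]
    · by_cases hji' : j = i + 1 <;>
        simp [hji', Finset.sum_ite_eq', hk]
  rw [Finset.sum_congr rfl (fun j _ => hrow j), Finset.sum_add_distrib,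
    Finset.sum_add_distrib, Finset.sum_ite_eq' (Finset.Icc 1 I) i (fun _ => D1),
    Finset.sum_ite_eq' (Finset.Icc 1 I) (i+1) (fun _ => D2), if_pos hi, if_pos hi']

end Helpers2

/-- Lemma 1 (throughput maximization): if the glue level on some sub-channel decreases
from epoch `i` to epoch `i+1`, the battery is full at the end of epoch `i`; if it
increases, the battery is empty at the end of epoch `i`. -/
theorem glue_level_change_battery_state (I K : ℕ) (hI : 1 ≤ I) (hK : 1 ≤ K)
    (τ : ℕ → ℝ) (hτ : ∀ i ∈ Finset.Icc 1 I, 0 < τ i)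
    (γ : ℕ → ℕ → ℝ) (hγ : ∀ i ∈ Finset.Icc 1 I, ∀ k ∈ Finset.Icc 1 K, 0 < γ i k)
    (E : ℕ → ℝ) (hE : ∀ i ∈ Finset.Icc 1 I, 0 ≤ E i) (hEtop : E (I + 1) = 0)
    (Emax : ℝ) (hEmax : 0 < Emax)
    (ε : ℝ) (hε : 0 < ε)
    (α Θ : ℕ → ℕ → ℝ) (hopt : ThroughputOptimal I K τ γ E Emax ε α Θ)
    (i k : ℕ) (hi1 : 1 ≤ i) (hiI : i < I) (hk : k ∈ Finset.Icc 1 K)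
    (hα : 0 < α i k) (hΘ : 0 < Θ i k)
    (hα' : 0 < α (i + 1) k) (hΘ' : 0 < Θ (i + 1) k) :
    (1 / γ i k + α i k / Θ i k > 1 / γ (i + 1) k + α (i + 1) k / Θ (i + 1) k →
      ∑ j ∈ Finset.Icc 1 (i + 1), E j
          - ∑ j ∈ Finset.Icc 1 i, ∑ k' ∈ Finset.Icc 1 K, (α j k' + Θ j k' * ε)
        = Emax) ∧
    (1 / γ i k + α i k / Θ i k < 1 / γ (i + 1) k + α (i + 1) k / Θ (i + 1) k →
      ∑ j ∈ Finset.Icc 1 i, ∑ k' ∈ Finset.Icc 1 K, (α j k' + Θ j k' * ε)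
        = ∑ j ∈ Finset.Icc 1 i, E j) := by
  obtain ⟨hfeas, hmax⟩ := hopt
  obtain ⟨hnn, hcaus, hover⟩ := hfeas
  have hiMem : i ∈ Finset.Icc 1 I := Finset.mem_Icc.mpr ⟨hi1, le_of_lt hiI⟩
  have hi1Mem : i + 1 ∈ Finset.Icc 1 I := Finset.mem_Icc.mpr ⟨by omega, hiI⟩
  have hγa : 0 < γ i k := hγ i hiMem k hk
  have hγb : 0 < γ (i+1) k := hγ (i+1) hi1Mem k hk
  set C : ℝ := ∑ j ∈ Finset.Icc 1 i, ∑ k' ∈ Finset.Icc 1 K, (α j k' + Θ j k' * ε) with hC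
  set La : ℝ := 1 / γ i k + α i k / Θ i k with hLa
  set Lb : ℝ := 1 / γ (i+1) k + α (i+1) k / Θ (i+1) k with hLb
  constructor
  · -- glue decreases: battery full
    intro hg
    by_contra hne
    have hslack : ∑ j ∈ Finset.Icc 1 (i+1), E j - C < Emax :=
      lt_of_le_of_ne (hover i hiMem) hne
    have hLab : Lb < La := hg
    set d : ℝ := min (Emax - (∑ j ∈ Finset.Icc 1 (i+1), E j - C))
        (min (α i k / 2) ((La - Lb) / (2 * (1/Θ i k + 1/Θ (i+1) k)))) with hd
    have hS : 0 < 1/Θ i k + 1/Θ (i+1) k := by positivity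
    have hdpos : 0 < d := by
      refine lt_min (by linarith) (lt_min (by positivity) ?_)
      have : 0 < La - Lb := by linarith
      positivity
    have hd1 : d ≤ Emax - (∑ j ∈ Finset.Icc 1 (i+1), E j - C) := min_le_left _ _
    have hd2 : d ≤ α i k / 2 := le_trans (min_le_right _ _) (min_le_left _ _)
    have hd3 : d ≤ (La - Lb) / (2 * (1/Θ i k + 1/Θ (i+1) k)) :=
      le_trans (min_le_right _ _) (min_le_right _ _)
    have hd3' : d * (1/Θ i k + 1/Θ (i+1) k) ≤ (La - Lb) / 2 := by
      calc d * (1/Θ i k + 1/Θ (i+1) k)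
          ≤ ((La - Lb) / (2 * (1/Θ i k + 1/Θ (i+1) k))) * (1/Θ i k + 1/Θ (i+1) k) :=
            mul_le_mul_of_nonneg_right hd3 (le_of_lt hS)
        _ = (La - Lb) / 2 := by field_simp
    have hlt : 1 / γ (i+1) k + α (i+1) k / Θ (i+1) k + d / Θ (i+1) k
        < 1 / γ i k + α i k / Θ i k - d / Θ i k := by
      have e : d / Θ i k + d / Θ (i+1) k = d * (1/Θ i k + 1/Θ (i+1) k) := by ring
      have : d / Θ i k + d / Θ (i+1) k ≤ (La - Lb) / 2 := by rw [e]; exact hd3'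
      have hpos : 0 < La - Lb := by linarith
      rw [hLa, hLb] at *
      linarith
    -- perturbed policy: σ = -d
    have hfeas' : ThroughputFeasible I K τ E Emax ε (movedPolicy α i k (-d)) Θ := by
      refine moved_feasible I K τ E Emax ε α Θ ⟨hnn, hcaus, hover⟩ i k hi1 hk (-d)
        (by linarith) (by linarith) (by rw [← hC]; linarith [hcaus i hiMem]) ?_
      rw [← hC]
      linarith
    have heq := moved_throughput I K γ α Θ i k (-d) hiMem hi1Mem hk hΘ.ne' hΘ'.ne'
    have hrw1 : α i k + -d = α i k - d := by ring
    have hrw2 : α (i+1) k - -d = α (i+1) k + d := by ring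
    rw [hrw1, hrw2] at heq
    have hgain := log_move_gain (γ i k) (γ (i+1) k) (Θ i k) (Θ (i+1) k)
      (α i k) (α (i+1) k) d hγa hγb hΘ hΘ' (le_of_lt hα') hdpos (by linarith) hlt
    have hle := hmax (movedPolicy α i k (-d)) Θ hfeas'
    rw [heq] at hle
    linarith
  · -- glue increases: battery empty
    intro hg
    by_contra hne
    have hslack : C < ∑ j ∈ Finset.Icc 1 i, E j :=
      lt_of_le_of_ne (hcaus i hiMem) hne
    have hLab : La < Lb := hg
    set d : ℝ := min ((∑ j ∈ Finset.Icc 1 i, E j) - C)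
        (min (α (i+1) k / 2) ((Lb - La) / (2 * (1/Θ i k + 1/Θ (i+1) k)))) with hd
    have hS : 0 < 1/Θ i k + 1/Θ (i+1) k := by positivity
    have hdpos : 0 < d := by
      refine lt_min (by linarith) (lt_min (by positivity) ?_)
      have : 0 < Lb - La := by linarith
      positivity
    have hd1 : d ≤ (∑ j ∈ Finset.Icc 1 i, E j) - C := min_le_left _ _
    have hd2 : d ≤ α (i+1) k / 2 := le_trans (min_le_right _ _) (min_le_left _ _)
    have hd3 : d ≤ (Lb - La) / (2 * (1/Θ i k + 1/Θ (i+1) k)) :=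
      le_trans (min_le_right _ _) (min_le_right _ _)
    have hd3' : d * (1/Θ i k + 1/Θ (i+1) k) ≤ (Lb - La) / 2 := by
      calc d * (1/Θ i k + 1/Θ (i+1) k)
          ≤ ((Lb - La) / (2 * (1/Θ i k + 1/Θ (i+1) k))) * (1/Θ i k + 1/Θ (i+1) k) :=
            mul_le_mul_of_nonneg_right hd3 (le_of_lt hS)
        _ = (Lb - La) / 2 := by field_simp
    have hlt : 1 / γ i k + α i k / Θ i k + d / Θ i k
        < 1 / γ (i+1) k + α (i+1) k / Θ (i+1) k - d / Θ (i+1) k := by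
      have e : d / Θ i k + d / Θ (i+1) k = d * (1/Θ i k + 1/Θ (i+1) k) := by ring
      have : d / Θ i k + d / Θ (i+1) k ≤ (Lb - La) / 2 := by rw [e]; exact hd3'
      have hpos : 0 < Lb - La := by linarith
      rw [hLa, hLb] at *
      linarith
    -- perturbed policy: σ = d
    have hfeas' : ThroughputFeasible I K τ E Emax ε (movedPolicy α i k d) Θ := by
      refine moved_feasible I K τ E Emax ε α Θ ⟨hnn, hcaus, hover⟩ i k hi1 hk d
        (by linarith) (by linarith) (by rw [← hC]; linarith) ?_
      rw [← hC]
      linarith [hover i hiMem]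
    have heq := moved_throughput I K γ α Θ i k d hiMem hi1Mem hk hΘ.ne' hΘ'.ne'
    have hgain := log_move_gain (γ (i+1) k) (γ i k) (Θ (i+1) k) (Θ i k)
      (α (i+1) k) (α i k) d hγb hγa hΘ' hΘ (le_of_lt hα) hdpos (by linarith) hlt
    have hle := hmax (movedPolicy α i k d) Θ hfeas'
    rw [heq] at hle
    linarith
end

section
/- (Lemma 2, throughput maximization.) Let (α,Θ) be an optimal policy for the throughput maximization problem. Then within any epoch i, the glue levels are equal across all sub-channels with non-zero allocation: if α_{i,k} > 0, Θ_{i,k} > 0, α_{i,k'} > 0, Θ_{i,k'} > 0, then 1/γ_{i,k} + α_{i,k}/Θ_{i,k} = 1/γ_{i,k'} + α_{i,k'}/Θ_{i,k'}. -/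
open Filter Topology Finset

lemma sum_eq_pair_of_zero {s : Finset ℕ} {k k' : ℕ} (F : ℕ → ℝ) (hk : k ∈ s)
    (hk' : k' ∈ s) (hkk' : k ≠ k') (hz : ∀ l ∈ s, l ≠ k → l ≠ k' → F l = 0) :
    ∑ l ∈ s, F l = F k + F k' := by
  rw [← Finset.sum_pair hkk']
  refine (Finset.sum_subset ?_ ?_).symm
  · intro l hl
    rcases Finset.mem_insert.mp hl with rfl | hl
    · exact hk
    · rw [Finset.mem_singleton.mp hl]; exact hk'
  · intro l hl hnot
    simp only [Finset.mem_insert, Finset.mem_singleton] at hnot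
    push_neg at hnot
    exact hz l hl hnot.1 hnot.2

lemma glue_aux (I K : ℕ)
    (τ : ℕ → ℝ) (γ : ℕ → ℕ → ℝ) (E : ℕ → ℝ) (Emax ε : ℝ)
    (α Θ : ℕ → ℕ → ℝ) (hopt : ThroughputOptimal I K τ γ E Emax ε α Θ)
    (i k k' : ℕ) (hi : i ∈ Finset.Icc 1 I)
    (hk : k ∈ Finset.Icc 1 K) (hk' : k' ∈ Finset.Icc 1 K)
    (hγk : 0 < γ i k) (hγk' : 0 < γ i k')
    (hα : 0 < α i k) (hΘ : 0 < Θ i k)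
    (hα' : 0 < α i k') (hΘ' : 0 < Θ i k')
    (hlt : 1 / γ i k + α i k / Θ i k < 1 / γ i k' + α i k' / Θ i k') : False := by
  have hkk' : k ≠ k' := by rintro rfl; exact lt_irrefl _ hlt
  -- the perturbation function
  set f : ℝ → ℝ := fun x =>
    Θ i k / 2 * Real.log (1 + γ i k * (α i k + x) / Θ i k)
      + Θ i k' / 2 * Real.log (1 + γ i k' * (α i k' - x) / Θ i k') with hf
  have hd1 : 0 < 1 + γ i k * α i k / Θ i k := by positivity
  have hd2 : 0 < 1 + γ i k' * α i k' / Θ i k' := by positivity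
  -- derivative of f at 0
  set c : ℝ := Θ i k / 2 * ((γ i k / Θ i k) / (1 + γ i k * α i k / Θ i k))
      + Θ i k' / 2 * ((-γ i k' / Θ i k') / (1 + γ i k' * α i k' / Θ i k')) with hcdef
  have hderiv : HasDerivAt f c 0 := by
    have h1 : HasDerivAt (fun x : ℝ => 1 + γ i k * (α i k + x) / Θ i k)
        (γ i k / Θ i k) 0 := by
      have h := ((((hasDerivAt_id (0 : ℝ)).const_add (α i k)).const_mul (γ i k)).div_const
        (Θ i k)).const_add 1
      simpa using h
    have h2 : HasDerivAt (fun x : ℝ => 1 + γ i k' * (α i k' - x) / Θ i k')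
        (-γ i k' / Θ i k') 0 := by
      have h := ((((hasDerivAt_id (0 : ℝ)).const_sub (α i k')).const_mul (γ i k')).div_const
        (Θ i k')).const_add 1
      simpa [neg_div] using h
    have h3 := (h1.log (by simpa using hd1.ne')).const_mul (Θ i k / 2)
    have h4 := (h2.log (by simpa using hd2.ne')).const_mul (Θ i k' / 2)
    have h5 := h3.add h4
    exact h5.congr_deriv (by simp only [add_zero, sub_zero, hcdef])
  have hcpos : 0 < c := by
    rw [hcdef]
    have hc : Θ i k / 2 * ((γ i k / Θ i k) / (1 + γ i k * α i k / Θ i k))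
        + Θ i k' / 2 * ((-γ i k' / Θ i k') / (1 + γ i k' * α i k' / Θ i k'))
        = γ i k / (2 * (1 + γ i k * α i k / Θ i k))
          - γ i k' / (2 * (1 + γ i k' * α i k' / Θ i k')) := by
      field_simp
      ring
    rw [hc, sub_pos, div_lt_div_iff₀ (by positivity) (by positivity)]
    have key := mul_lt_mul_of_pos_left hlt
      (show (0:ℝ) < 2 * γ i k * γ i k' by positivity)
    have l1 : 2 * γ i k * γ i k' * (1 / γ i k + α i k / Θ i k)
        = γ i k' * (2 * (1 + γ i k * α i k / Θ i k)) := by field_simp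
    have l2 : 2 * γ i k * γ i k' * (1 / γ i k' + α i k' / Θ i k')
        = γ i k * (2 * (1 + γ i k' * α i k' / Θ i k')) := by field_simp
    linarith
  -- find a good perturbation size x
  obtain ⟨x, hx0, hxa, hfx⟩ : ∃ x : ℝ, 0 < x ∧ x < α i k' ∧ f 0 < f x := by
    have hs := hasDerivAt_iff_tendsto_slope.mp hderiv
    have h1 : ∀ᶠ x in 𝓝[≠] (0:ℝ), 0 < slope f 0 x := hs.eventually (eventually_gt_nhds hcpos)
    have h2 : ∀ᶠ x in 𝓝[>] (0:ℝ), 0 < slope f 0 x :=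
      h1.filter_mono (nhdsWithin_mono _ fun x hx => ne_of_gt hx)
    have h3 : ∀ᶠ x in 𝓝[>] (0:ℝ), x < α i k' :=
      eventually_nhdsWithin_of_eventually_nhds (eventually_lt_nhds hα')
    have h4 : ∀ᶠ x in 𝓝[>] (0:ℝ), 0 < x := eventually_mem_nhdsWithin.mono fun x hx => hx
    obtain ⟨x, hx⟩ := (h2.and (h3.and h4)).exists
    have hsl := hx.1
    have hxa := hx.2.1
    have hx0 := hx.2.2
    refine ⟨x, hx0, hxa, ?_⟩
    rw [slope_def_field] at hsl
    have h5 : 0 < f x - f 0 := by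
      have := mul_pos hsl (sub_pos.mpr hx0 : (0:ℝ) < x - 0)
      rwa [div_mul_cancel₀] at this
      simpa using hx0.ne'
    linarith
  -- the perturbed policy
  set g : ℕ → ℝ :=
    Function.update (Function.update (α i) k (α i k + x)) k' (α i k' - x) with hg
  set α₂ : ℕ → ℕ → ℝ := Function.update α i g with hα₂def
  have hα₂i : ∀ l, α₂ i l = g l := fun l => by
    rw [hα₂def, Function.update_self]
  have hα₂ne : ∀ j, j ≠ i → ∀ l, α₂ j l = α j l := fun j hj l => by
    rw [hα₂def, Function.update_of_ne hj]
  have hgk : g k = α i k + x := by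
    rw [hg, Function.update_of_ne hkk', Function.update_self]
  have hgk' : g k' = α i k' - x := by rw [hg, Function.update_self]
  have hgo : ∀ l, l ≠ k → l ≠ k' → g l = α i l := fun l h1 h2 => by
    rw [hg, Function.update_of_ne h2, Function.update_of_ne h1]
  obtain ⟨⟨hfe1, hfe2, hfe3⟩, hmax⟩ := hopt
  -- inner sums are preserved
  have hinner : ∀ j, ∑ l ∈ Finset.Icc 1 K, (α₂ j l + Θ j l * ε)
      = ∑ l ∈ Finset.Icc 1 K, (α j l + Θ j l * ε) := by
    intro j
    rcases eq_or_ne j i with rfl | hj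
    · rw [← sub_eq_zero, ← Finset.sum_sub_distrib]
      rw [sum_eq_pair_of_zero _ hk hk' hkk' (fun l hl h1 h2 => by
        simp only [hα₂i, hgo l h1 h2]; ring)]
      simp only [hα₂i, hgk, hgk']
      ring
    · refine Finset.sum_congr rfl fun l _ => ?_
      rw [hα₂ne j hj]
  -- feasibility of the perturbed policy
  have hfeas : ThroughputFeasible I K τ E Emax ε α₂ Θ := by
    refine ⟨?_, ?_, ?_⟩
    · intro j hj l hl
      refine ⟨?_, (hfe1 j hj l hl).2.1, (hfe1 j hj l hl).2.2⟩
      rcases eq_or_ne j i with rfl | hne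
      · rcases eq_or_ne l k' with rfl | h2
        · rw [hα₂i, hgk']; linarith
        · rcases eq_or_ne l k with rfl | h1
          · rw [hα₂i, hgk]; linarith
          · rw [hα₂i, hgo l h1 h2]; exact (hfe1 j hj l hl).1
      · rw [hα₂ne j hne]; exact (hfe1 j hj l hl).1
    · intro j hj
      calc ∑ m ∈ Finset.Icc 1 j, ∑ l ∈ Finset.Icc 1 K, (α₂ m l + Θ m l * ε)
          = ∑ m ∈ Finset.Icc 1 j, ∑ l ∈ Finset.Icc 1 K, (α m l + Θ m l * ε) :=
            Finset.sum_congr rfl fun m _ => hinner m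
        _ ≤ ∑ m ∈ Finset.Icc 1 j, E m := hfe2 j hj
    · intro j hj
      have heq : ∑ m ∈ Finset.Icc 1 j, ∑ l ∈ Finset.Icc 1 K, (α₂ m l + Θ m l * ε)
          = ∑ m ∈ Finset.Icc 1 j, ∑ l ∈ Finset.Icc 1 K, (α m l + Θ m l * ε) :=
        Finset.sum_congr rfl fun m _ => hinner m
      rw [heq]
      exact hfe3 j hj
  -- throughput strictly increases
  have key : ThroughputOf I K γ α₂ Θ - ThroughputOf I K γ α Θ = f x - f 0 := by
    unfold ThroughputOf
    rw [← Finset.sum_sub_distrib]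
    rw [Finset.sum_eq_single_of_mem i hi (fun j _ hj => by
      rw [sub_eq_zero]
      exact Finset.sum_congr rfl fun l _ => by rw [hα₂ne j hj])]
    rw [← Finset.sum_sub_distrib]
    rw [sum_eq_pair_of_zero _ hk hk' hkk' (fun l hl h1 h2 => by
      rw [sub_eq_zero, hα₂i, hgo l h1 h2])]
    simp only [if_neg hΘ.ne', if_neg hΘ'.ne', hα₂i, hgk, hgk', hf, add_zero, sub_zero]
    ring
  have hle := hmax α₂ Θ hfeas
  linarith


/-- Lemma 2 (throughput maximization): in an optimal policy, within any epoch the glue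
levels are equal across all sub-channels with non-zero allocation. -/
theorem glue_levels_equal_within_epoch (I K : ℕ) (hI : 1 ≤ I) (hK : 1 ≤ K)
    (τ : ℕ → ℝ) (hτ : ∀ i ∈ Finset.Icc 1 I, 0 < τ i)
    (γ : ℕ → ℕ → ℝ) (hγ : ∀ i ∈ Finset.Icc 1 I, ∀ k ∈ Finset.Icc 1 K, 0 < γ i k)
    (E : ℕ → ℝ) (hE : ∀ i ∈ Finset.Icc 1 I, 0 ≤ E i) (hEtop : E (I + 1) = 0)
    (Emax : ℝ) (hEmax : 0 < Emax)
    (ε : ℝ) (hε : 0 < ε)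
    (α Θ : ℕ → ℕ → ℝ) (hopt : ThroughputOptimal I K τ γ E Emax ε α Θ)
    (i k k' : ℕ) (hi : i ∈ Finset.Icc 1 I)
    (hk : k ∈ Finset.Icc 1 K) (hk' : k' ∈ Finset.Icc 1 K)
    (hα : 0 < α i k) (hΘ : 0 < Θ i k)
    (hα' : 0 < α i k') (hΘ' : 0 < Θ i k') :
    1 / γ i k + α i k / Θ i k = 1 / γ i k' + α i k' / Θ i k' := by
  rcases lt_trichotomy (1 / γ i k + α i k / Θ i k) (1 / γ i k' + α i k' / Θ i k')
    with h | h | h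
  · exact absurd h (fun h => glue_aux I K τ γ E Emax ε α Θ hopt i k k' hi hk hk'
      (hγ i hi k hk) (hγ i hi k' hk') hα hΘ hα' hΘ' h)
  · exact h
  · exact absurd h (fun h => glue_aux I K τ γ E Emax ε α Θ hopt i k' k hi hk' hk
      (hγ i hi k' hk') (hγ i hi k hk) hα' hΘ' hα hΘ h)
end

section
/- Let (α,Θ) be an optimal policy for the throughput maximization problem, and suppose α_{i,k} > 0 and Θ_{i,k} > 0 for some epoch i and sub-channel k; set p = α_{i,k}/Θ_{i,k}. Then (1/γ_{i,k} + p)·log(1 + γ_{i,k}·p) ≥ p + ε, i.e., p ≥ p*(γ_{i,k},ε); and if in addition Θ_{i,k} < τ_i, then equality holds, i.e., p = p*(γ_{i,k},ε). -/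
open Real Filter Set Topology

noncomputable def gfun (G c eps θ : ℝ) : ℝ := θ/2 * Real.log (1 + G * (c - eps*θ) / θ)

lemma pert_analysis (G a t T eps : ℝ) (hG : 0 < G) (ha : 0 < a) (ht : 0 < t)
    (heps : 0 < eps) (htT : t ≤ T)
    (hmax : ∀ θ, 0 < θ → θ ≤ T → eps * θ ≤ a + eps * t →
      gfun G (a + eps*t) eps θ ≤ gfun G (a + eps*t) eps t) :
    ((1/G + a/t) * Real.log (1 + G * (a/t)) ≥ a/t + eps) ∧
    (t < T → (1/G + a/t) * Real.log (1 + G * (a/t)) = a/t + eps) := by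
  set c : ℝ := a + eps * t with hc
  set A : ℝ := 1 - G * eps with hA
  set B : ℝ := G * c with hB
  have htne : t ≠ 0 := ne_of_gt ht
  have hAtB : A * t + B = t + G * a := by rw [hA, hB, hc]; ring
  have hP : (0:ℝ) < t + G * a := by positivity
  have hABt : 0 < A * t + B := hAtB ▸ hP
  -- derivative of the smooth model function
  have h1 : HasDerivAt (fun x : ℝ => x / 2) (1/2) t := by
    simpa using (hasDerivAt_id t).div_const 2
  have h2 : HasDerivAt (fun x : ℝ => Real.log (A * x + B)) (A * 1 / (A * t + B)) t :=
    (((hasDerivAt_id t).const_mul A).add_const B).log (ne_of_gt hABt)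
  have h3 : HasDerivAt Real.log t⁻¹ t := Real.hasDerivAt_log htne
  have hh := h1.mul (h2.sub h3)
  set D : ℝ := 1/2 * (Real.log (A * t + B) - Real.log t) +
      t / 2 * (A * 1 / (A * t + B) - t⁻¹) with hD
  -- transfer to gfun via eventual equality
  have hsopen : IsOpen {x : ℝ | 0 < x ∧ 0 < A * x + B} :=
    (isOpen_lt continuous_const continuous_id).inter
      (isOpen_lt continuous_const ((continuous_const.mul continuous_id).add continuous_const))
  have hts : t ∈ {x : ℝ | 0 < x ∧ 0 < A * x + B} := ⟨ht, hABt⟩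
  have heqev : (fun θ => gfun G c eps θ) =ᶠ[nhds t]
      (fun x : ℝ => x / 2 * (Real.log (A * x + B) - Real.log x)) := by
    filter_upwards [hsopen.mem_nhds hts] with x hx
    obtain ⟨hx1, hx2⟩ := hx
    have hq : 1 + G * (c - eps * x) / x = (A * x + B) / x := by
      rw [hA, hB]; field_simp; ring
    rw [gfun, hq, Real.log_div (ne_of_gt hx2) (ne_of_gt hx1)]
  have hg : HasDerivAt (fun θ => gfun G c eps θ) D t := hh.congr_of_eventuallyEq heqev
  have hslope : Tendsto (slope (fun θ => gfun G c eps θ) t) (𝓝[≠] t) (nhds D) :=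
    hasDerivAt_iff_tendsto_slope.mp hg
  -- left limit : D ≥ 0
  have hDnn : 0 ≤ D := by
    have hmono : 𝓝[<] t ≤ 𝓝[≠] t :=
      nhdsWithin_mono t (fun x hx => ne_of_lt hx)
    have hev : ∀ᶠ x in 𝓝[<] t, 0 ≤ slope (fun θ => gfun G c eps θ) t x := by
      filter_upwards [Ioo_mem_nhdsLT ht] with x hx
      have hgle : gfun G c eps x ≤ gfun G c eps t := by
        refine hmax x hx.1 (le_trans hx.2.le htT) ?_
        have := hx.2
        nlinarith
      rw [slope_def_field]
      have h1 : (0:ℝ) ≤ -(gfun G c eps x - gfun G c eps t) := by linarith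
      have h2 : (0:ℝ) ≤ -(x - t) := by linarith [hx.2]
      have := div_nonneg h1 h2
      rwa [neg_div_neg_eq] at this
    exact ge_of_tendsto (hslope.mono_left hmono) hev
  -- algebra: express D
  have hlog : Real.log (A * t + B) - Real.log t = Real.log (1 + G * (a/t)) := by
    rw [hAtB, ← Real.log_div (ne_of_gt hP) htne]
    congr 1
    field_simp
  have hDval : D = (1/2) * Real.log (1 + G * (a/t)) - G * c / (2 * (t + G * a)) := by
    rw [hD, hlog, hAtB, hA, hc]
    field_simp
    ring
  have key : (1/G + a/t) * Real.log (1 + G * (a/t)) - (a/t + eps) =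
      (Real.log (1 + G * (a/t)) * (t + G*a) - G * c) / (G * t) := by
    rw [hc]; field_simp
  constructor
  · rw [ge_iff_le, ← sub_nonneg, key]
    apply div_nonneg _ (by positivity)
    rw [hDval] at hDnn
    have : G * c / (2 * (t + G * a)) ≤ (1/2) * Real.log (1 + G * (a/t)) := by linarith
    rw [div_le_iff₀ (by positivity)] at this
    linarith
  · intro htT'
    -- right limit : D ≤ 0
    have hu : t < min T (t + a / eps) := lt_min htT' (by nlinarith [div_pos ha heps])
    have hDnp : D ≤ 0 := by
      have hmono : 𝓝[>] t ≤ 𝓝[≠] t :=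
        nhdsWithin_mono t (fun x hx => ne_of_gt hx)
      have hev : ∀ᶠ x in 𝓝[>] t, slope (fun θ => gfun G c eps θ) t x ≤ 0 := by
        filter_upwards [Ioo_mem_nhdsGT hu] with x hx
        have hx2 := hx.2
        have hxT : x ≤ T := le_trans hx2.le (min_le_left _ _)
        have hxc : eps * x ≤ a + eps * t := by
          have hx' : x < t + a / eps := lt_of_lt_of_le hx2 (min_le_right _ _)
          have h' : (x - t) * eps < a := by
            rw [← lt_div_iff₀ heps]; linarith
          nlinarith [h']
        have hgle : gfun G c eps x ≤ gfun G c eps t :=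
          hmax x (lt_trans ht hx.1) hxT hxc
        rw [slope_def_field]
        apply div_nonpos_of_nonpos_of_nonneg (by linarith) (by linarith [hx.1])
      exact le_of_tendsto (hslope.mono_left hmono) hev
    have hD0 : D = 0 := le_antisymm hDnp hDnn
    have : Real.log (1 + G * (a/t)) * (t + G*a) - G * c = 0 := by
      rw [hDval] at hD0
      generalize hLL : Real.log (1 + G * (a/t)) = L at hD0 ⊢
      have hP' : (t + G*a) ≠ 0 := ne_of_gt hP
      field_simp at hD0
      linarith
    rw [← sub_eq_zero, key, this, zero_div]
/-- In an optimal policy for throughput maximization, any used power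
`p = α_{i,k}/Θ_{i,k}` satisfies `(1/γ + p) log(1+γp) ≥ p + ε` (i.e. `p ≥ p*(γ,ε)`),
with equality (i.e. `p = p*(γ,ε)`) when the epoch is only partially used. -/
theorem optimal_power_at_least_pstar (I K : ℕ) (hI : 1 ≤ I) (hK : 1 ≤ K)
    (τ : ℕ → ℝ) (hτ : ∀ i ∈ Finset.Icc 1 I, 0 < τ i)
    (γ : ℕ → ℕ → ℝ) (hγ : ∀ i ∈ Finset.Icc 1 I, ∀ k ∈ Finset.Icc 1 K, 0 < γ i k)
    (E : ℕ → ℝ) (hE : ∀ i ∈ Finset.Icc 1 I, 0 ≤ E i) (hEtop : E (I + 1) = 0)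
    (Emax : ℝ) (hEmax : 0 < Emax)
    (ε : ℝ) (hε : 0 < ε)
    (α Θ : ℕ → ℕ → ℝ) (hopt : ThroughputOptimal I K τ γ E Emax ε α Θ)
    (i k : ℕ) (hi : i ∈ Finset.Icc 1 I) (hk : k ∈ Finset.Icc 1 K)
    (hα : 0 < α i k) (hΘ : 0 < Θ i k) :
    (1 / γ i k + α i k / Θ i k) * Real.log (1 + γ i k * (α i k / Θ i k))
        ≥ α i k / Θ i k + ε ∧
    (Θ i k < τ i →
      (1 / γ i k + α i k / Θ i k) * Real.log (1 + γ i k * (α i k / Θ i k))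
        = α i k / Θ i k + ε) := by
  obtain ⟨⟨hbound, hcaus, hover⟩, hmaxT⟩ := hopt
  have hG : 0 < γ i k := hγ i hi k hk
  have htτ : Θ i k ≤ τ i := (hbound i hi k hk).2.2
  set c : ℝ := α i k + ε * Θ i k with hc
  have key : ∀ θ', 0 < θ' → θ' ≤ τ i → ε * θ' ≤ α i k + ε * Θ i k →
      gfun (γ i k) (α i k + ε * Θ i k) ε θ' ≤ gfun (γ i k) (α i k + ε * Θ i k) ε (Θ i k) := by
    intro θ' h1 h2 h3
    set α' : ℕ → ℕ → ℝ := fun j l => if j = i ∧ l = k then c - ε * θ' else α j l with hα'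
    set Θ' : ℕ → ℕ → ℝ := fun j l => if j = i ∧ l = k then θ' else Θ j l with hΘ'
    have hpw : ∀ j l, α' j l + Θ' j l * ε = α j l + Θ j l * ε := by
      intro j l
      by_cases h : j = i ∧ l = k
      · obtain ⟨rfl, rfl⟩ := h
        simp only [hα', hΘ', if_pos (⟨rfl, rfl⟩ : j = j ∧ l = l)]
        rw [hc]; ring
      · simp [hα', hΘ', h]
    have hfeas' : ThroughputFeasible I K τ E Emax ε α' Θ' := by
      refine ⟨?_, ?_, ?_⟩
      · intro j hj l hl
        by_cases h : j = i ∧ l = k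
        · obtain ⟨rfl, rfl⟩ := h
          simp only [hα', hΘ', if_pos (⟨rfl, rfl⟩ : j = j ∧ l = l)]
          exact ⟨by linarith, le_of_lt h1, h2⟩
        · simp only [hα', hΘ', if_neg h]
          exact hbound j hj l hl
      · intro m hm
        simp only [hpw]
        exact hcaus m hm
      · intro m hm
        simp only [hpw]
        exact hover m hm
    have hle := hmaxT α' Θ' hfeas'
    have hdiff : (∑ j ∈ Finset.Icc 1 I, ∑ l ∈ Finset.Icc 1 K,
        ((if Θ' j l = 0 then 0 else Θ' j l / 2 * Real.log (1 + γ j l * α' j l / Θ' j l))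
          - (if Θ j l = 0 then 0 else Θ j l / 2 * Real.log (1 + γ j l * α j l / Θ j l))))
        = (if Θ' i k = 0 then 0 else Θ' i k / 2 * Real.log (1 + γ i k * α' i k / Θ' i k))
          - (if Θ i k = 0 then 0 else Θ i k / 2 * Real.log (1 + γ i k * α i k / Θ i k)) := by
      rw [Finset.sum_eq_single_of_mem i hi]
      · rw [Finset.sum_eq_single_of_mem k hk]
        intro l hl hlk
        have hne : ¬(i = i ∧ l = k) := fun h => hlk h.2
        simp [hα', hΘ', hne, hlk]
      · intro j hj hji
        apply Finset.sum_eq_zero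
        intro l hl
        have hne : ¬(j = i ∧ l = k) := fun h => hji h.1
        simp [hα', hΘ', hne, hji]
    have hle2 : (if Θ' i k = 0 then (0:ℝ) else Θ' i k / 2 * Real.log (1 + γ i k * α' i k / Θ' i k))
          - (if Θ i k = 0 then (0:ℝ) else Θ i k / 2 * Real.log (1 + γ i k * α i k / Θ i k)) ≤ 0 := by
      rw [← hdiff]
      simp only [Finset.sum_sub_distrib]
      unfold ThroughputOf at hle
      linarith
    have hΘ'ik : Θ' i k = θ' := by simp [hΘ']
    have hα'ik : α' i k = c - ε * θ' := by simp [hα']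
    have e1 : (if Θ' i k = 0 then (0:ℝ) else Θ' i k / 2 * Real.log (1 + γ i k * α' i k / Θ' i k))
        = gfun (γ i k) c ε θ' := by
      rw [hΘ'ik, hα'ik, if_neg (ne_of_gt h1), gfun]
    have e2 : (if Θ i k = 0 then (0:ℝ) else Θ i k / 2 * Real.log (1 + γ i k * α i k / Θ i k))
        = gfun (γ i k) c ε (Θ i k) := by
      have hca : c - ε * Θ i k = α i k := by rw [hc]; ring
      rw [if_neg (ne_of_gt hΘ), gfun, hca]
    rw [e1, e2] at hle2
    rw [← hc]
    linarith
  exact pert_analysis (γ i k) (α i k) (Θ i k) (τ i) ε hG hα hΘ hε htτ key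
end

section
/- (No bursty transmission without processing cost; throughput.) Consider the throughput maximization problem with zero processing cost, i.e., with the feasibility constraints and objective evaluated at ε = 0. Then every optimal policy (α,Θ) satisfies: for all i, k with α_{i,k} > 0, the full epoch is used, Θ_{i,k} = τ_i. -/
lemma aux_key (c θ1 θ2 : ℝ) (hc : 0 < c) (h1 : 0 < θ1) (h12 : θ1 < θ2) :
    θ1 * Real.log (1 + c / θ1) < θ2 * Real.log (1 + c / θ2) := by
  have h2 : 0 < θ2 := h1.trans h12
  set t := θ1 / θ2 with ht
  have ht0 : 0 < t := div_pos h1 h2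
  have ht1 : t < 1 := (div_lt_one h2).2 h12
  have ha : (1:ℝ) < 1 + c / θ1 := lt_add_of_pos_right _ (div_pos hc h1)
  have hcc : t • Real.log (1 + c / θ1) + (1 - t) • Real.log 1
      < Real.log (t • (1 + c / θ1) + (1 - t) • (1:ℝ)) :=
    strictConcaveOn_log_Ioi.2 (by simpa using lt_trans one_pos ha) (by simp)
      (ne_of_gt ha) ht0 (by linarith) (by ring)
  simp only [smul_eq_mul, Real.log_one, mul_zero, add_zero, mul_one] at hcc
  have htθ : t * θ2 = θ1 := by rw [ht]; exact div_mul_cancel₀ θ1 h2.ne'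
  have heq : t * (1 + c / θ1) + (1 - t) = 1 + c / θ2 := by
    field_simp [ht]
    linear_combination c * htθ
  rw [heq] at hcc
  have := mul_lt_mul_of_pos_left hcc h2
  calc θ1 * Real.log (1 + c / θ1) = θ2 * (t * Real.log (1 + c / θ1)) := by
        field_simp [ht]
        linear_combination (-Real.log ((θ1 + c) / θ1)) * htθ
    _ < θ2 * Real.log (1 + c / θ2) := this

/-- No bursty transmission without processing cost: with `ε = 0`, every optimal policy
for throughput maximization uses the full epoch whenever it allocates nonzero energy. -/
theorem no_bursty_transmission_zero_cost (I K : ℕ) (hI : 1 ≤ I) (hK : 1 ≤ K)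
    (τ : ℕ → ℝ) (hτ : ∀ i ∈ Finset.Icc 1 I, 0 < τ i)
    (γ : ℕ → ℕ → ℝ) (hγ : ∀ i ∈ Finset.Icc 1 I, ∀ k ∈ Finset.Icc 1 K, 0 < γ i k)
    (E : ℕ → ℝ) (hE : ∀ i ∈ Finset.Icc 1 I, 0 ≤ E i) (hEtop : E (I + 1) = 0)
    (Emax : ℝ) (hEmax : 0 < Emax)
    (α Θ : ℕ → ℕ → ℝ) (hopt : ThroughputOptimal I K τ γ E Emax 0 α Θ) :
    ∀ i ∈ Finset.Icc 1 I, ∀ k ∈ Finset.Icc 1 K, 0 < α i k → Θ i k = τ i := by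
  intro i hi k hk hα
  by_contra hne
  obtain ⟨⟨hb, hc1, hc2⟩, hmax⟩ := hopt
  obtain ⟨hα0, hΘ0, hΘτ⟩ := hb i hi k hk
  have hτi := hτ i hi
  have hγik := hγ i hi k hk
  have hΘlt : Θ i k < τ i := lt_of_le_of_ne hΘτ hne
  set Θ' : ℕ → ℕ → ℝ := fun j l => if j = i ∧ l = k then τ i else Θ j l with hΘ'def
  have hfeas' : ThroughputFeasible I K τ E Emax 0 α Θ' := by
    refine ⟨?_, ?_, ?_⟩
    · intro j hj l hl
      by_cases h : j = i ∧ l = k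
      · obtain ⟨rfl, rfl⟩ := h
        exact ⟨hα0, by simp [hΘ'def, hτi.le]⟩
      · have hjl := hb j hj l hl
        simpa [hΘ'def, h] using hjl
    · intro j hj
      simpa [mul_zero] using hc1 j hj
    · intro j hj
      simpa [mul_zero] using hc2 j hj
  have hlt : ThroughputOf I K γ α Θ < ThroughputOf I K γ α Θ' := by
    unfold ThroughputOf
    rw [← Finset.sum_product' (f := fun j l =>
      (if Θ j l = 0 then 0 else Θ j l / 2 * Real.log (1 + γ j l * α j l / Θ j l))),
      ← Finset.sum_product' (f := fun j l =>
      (if Θ' j l = 0 then 0 else Θ' j l / 2 * Real.log (1 + γ j l * α j l / Θ' j l)))]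
    apply Finset.sum_lt_sum
    · intro p hp
      by_cases h : p.1 = i ∧ p.2 = k
      · obtain ⟨h1, h2⟩ := h
        rw [h1, h2]
        have hΘ'ik : Θ' i k = τ i := by simp [hΘ'def]
        rw [hΘ'ik]
        rw [if_neg (ne_of_gt hτi)]
        by_cases h0 : Θ i k = 0
        · rw [if_pos h0]
          have : 0 < Real.log (1 + γ i k * α i k / τ i) := by
            apply Real.log_pos
            have : 0 < γ i k * α i k / τ i := by positivity
            linarith
          positivity
        · rw [if_neg h0]
          have hΘpos : 0 < Θ i k := lt_of_le_of_ne hΘ0 (Ne.symm h0)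
          have hc : 0 < γ i k * α i k := by positivity
          have := aux_key (γ i k * α i k) (Θ i k) (τ i) hc hΘpos hΘlt
          nlinarith
      · have : Θ' p.1 p.2 = Θ p.1 p.2 := by simp [hΘ'def, h]
        rw [this]
    · refine ⟨(i, k), ?_, ?_⟩
      · simp [Finset.mem_product, hi, hk]
      · have hΘ'ik : Θ' i k = τ i := by simp [hΘ'def]
        simp only [hΘ'ik]
        rw [if_neg (ne_of_gt hτi)]
        by_cases h0 : Θ i k = 0
        · rw [if_pos h0]
          have : 0 < Real.log (1 + γ i k * α i k / τ i) := by
            apply Real.log_pos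
            have : 0 < γ i k * α i k / τ i := by positivity
            linarith
          positivity
        · rw [if_neg h0]
          have hΘpos : 0 < Θ i k := lt_of_le_of_ne hΘ0 (Ne.symm h0)
          have hc : 0 < γ i k * α i k := by positivity
          have := aux_key (γ i k * α i k) (Θ i k) (τ i) hc hΘpos hΘlt
          nlinarith
  exact absurd (hmax α Θ' hfeas') (not_le.2 hlt)
end

section
/- (Glue-pouring, first case, two fading levels.) Let γ₁ > γ₂ > 0, ε > 0, τ₁ > 0, τ₂ > 0, and let 0 < E ≤ τ₁·(p*(γ₁,ε)+ε). Then for all Θ₁ ∈ [0,τ₁], Θ₂ ∈ [0,τ₂], p₁ ≥ 0, p₂ ≥ 0 satisfying Θ₁·(p₁+ε) + Θ₂·(p₂+ε) ≤ E, one has (Θ₁/2)·log(1+γ₁p₁) + (Θ₂/2)·log(1+γ₂p₂) ≤ (E/(2(p*(γ₁,ε)+ε)))·log(1+γ₁·p*(γ₁,ε)), and this bound is attained by Θ₁ = E/(p*(γ₁,ε)+ε), p₁ = p*(γ₁,ε), Θ₂ = 0, p₂ = 0. That is, when the available energy satisfies E ≤ τ₁·(p*(γ₁,ε)+ε), it is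 optimal to transmit only during the better fading state at power p*(γ₁,ε). -/
/-- Glue-pouring, first case, two fading levels `γ₁ > γ₂`: when the available energy
satisfies `E ≤ τ₁ (p*(γ₁,ε) + ε)`, it is optimal to transmit only during the better
fading state at power `p*(γ₁,ε)`, for a duration `E/(p*(γ₁,ε)+ε)`. -/
theorem glue_pouring_first_case (γ₁ γ₂ ε τ₁ τ₂ E pstar : ℝ)
    (hγ₂ : 0 < γ₂) (hγ₁₂ : γ₂ < γ₁) (hε : 0 < ε) (hτ₁ : 0 < τ₁) (hτ₂ : 0 < τ₂)
    (hE0 : 0 < E)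
    (hp : 0 < pstar)
    (hpe : (1 / γ₁ + pstar) * Real.log (1 + γ₁ * pstar) = pstar + ε)
    (hE : E ≤ τ₁ * (pstar + ε)) :
    (∀ Θ₁ Θ₂ p₁ p₂ : ℝ, 0 ≤ Θ₁ → Θ₁ ≤ τ₁ → 0 ≤ Θ₂ → Θ₂ ≤ τ₂ → 0 ≤ p₁ → 0 ≤ p₂ →
      Θ₁ * (p₁ + ε) + Θ₂ * (p₂ + ε) ≤ E →
      Θ₁ / 2 * Real.log (1 + γ₁ * p₁) + Θ₂ / 2 * Real.log (1 + γ₂ * p₂)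
        ≤ E / (2 * (pstar + ε)) * Real.log (1 + γ₁ * pstar)) ∧
    (0 ≤ E / (pstar + ε) ∧ E / (pstar + ε) ≤ τ₁ ∧
      E / (pstar + ε) * (pstar + ε) + 0 * (0 + ε) ≤ E ∧
      (E / (pstar + ε)) / 2 * Real.log (1 + γ₁ * pstar)
          + 0 / 2 * Real.log (1 + γ₂ * 0)
        = E / (2 * (pstar + ε)) * Real.log (1 + γ₁ * pstar)) := by
  have hγ₁ : 0 < γ₁ := hγ₂.trans hγ₁₂
  have hpε : 0 < pstar + ε := by linarith
  have hS : (0:ℝ) < 1 + γ₁ * pstar := by nlinarith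
  set L : ℝ := γ₁ / (1 + γ₁ * pstar) with hL
  have hLpos : 0 < L := div_pos hγ₁ hS
  have hlogS : Real.log (1 + γ₁ * pstar) = (pstar + ε) * L := by
    have h : (1 / γ₁ + pstar) = (1 + γ₁ * pstar) / γ₁ := by field_simp
    rw [h] at hpe
    rw [hL]
    field_simp at hpe ⊢
    nlinarith [hpe]
  have key : ∀ γ p : ℝ, 0 < γ → γ ≤ γ₁ → 0 ≤ p →
      Real.log (1 + γ * p) ≤ (p + ε) * L := by
    intro γ p hγ hγle hp0
    have h1 : (0:ℝ) < 1 + γ * p := by nlinarith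
    have h2 : (0:ℝ) < 1 + γ₁ * p := by nlinarith
    have step1 : Real.log (1 + γ * p) ≤ Real.log (1 + γ₁ * p) :=
      Real.log_le_log h1 (by nlinarith)
    have step2 : Real.log ((1 + γ₁ * p) / (1 + γ₁ * pstar))
        ≤ (1 + γ₁ * p) / (1 + γ₁ * pstar) - 1 :=
      Real.log_le_sub_one_of_pos (div_pos h2 hS)
    have step3 : Real.log (1 + γ₁ * p)
        = Real.log ((1 + γ₁ * p) / (1 + γ₁ * pstar)) + Real.log (1 + γ₁ * pstar) := by
      rw [Real.log_div h2.ne' hS.ne']; ring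
    have heq : (1 + γ₁ * p) / (1 + γ₁ * pstar) - 1 + (pstar + ε) * L = (p + ε) * L := by
      rw [hL]; field_simp; ring
    rw [hlogS] at step3
    linarith
  constructor
  · intro Θ₁ Θ₂ p₁ p₂ h10 h1τ h20 h2τ hp1 hp2 hsum
    have k1 := key γ₁ p₁ hγ₁ le_rfl hp1
    have k2 := key γ₂ p₂ hγ₂ hγ₁₂.le hp2
    have b1 : Θ₁ / 2 * Real.log (1 + γ₁ * p₁) ≤ Θ₁ / 2 * ((p₁ + ε) * L) :=
      mul_le_mul_of_nonneg_left k1 (by linarith)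
    have b2 : Θ₂ / 2 * Real.log (1 + γ₂ * p₂) ≤ Θ₂ / 2 * ((p₂ + ε) * L) :=
      mul_le_mul_of_nonneg_left k2 (by linarith)
    have hb : Θ₁ / 2 * ((p₁ + ε) * L) + Θ₂ / 2 * ((p₂ + ε) * L) ≤ E * L / 2 := by
      have : Θ₁ * (p₁ + ε) * L + Θ₂ * (p₂ + ε) * L ≤ E * L :=
        by nlinarith [hLpos.le]
      linarith [this]
    have hfin : E / (2 * (pstar + ε)) * Real.log (1 + γ₁ * pstar) = E * L / 2 := by
      rw [hlogS]; field_simp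
    linarith
  · refine ⟨div_nonneg hE0.le hpε.le, (div_le_iff₀ hpε).mpr (by linarith), ?_, ?_⟩
    · rw [div_mul_cancel₀ _ hpε.ne']; linarith
    · have h0 : Real.log (1 + γ₂ * 0) = 0 := by norm_num
      rw [h0]
      have h2 : E / (pstar + ε) / 2 = E / (2 * (pstar + ε)) := by
        rw [div_div, mul_comm]
      rw [h2]; ring
end

section
/- The maximum energy efficiency is strictly increasing in the channel gain: if γ₁ > γ₂ > 0 and ε > 0, then log(1+γ₁·p*(γ₁,ε))/(p*(γ₁,ε)+ε) > log(1+γ₂·p*(γ₂,ε))/(p*(γ₂,ε)+ε); equivalently, sup_{p ≥ 0} log(1+γ₁p)/(p+ε) > sup_{p ≥ 0} log(1+γ₂p)/(p+ε). -/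
/-- If `p` satisfies the critical-point equation, it is a global maximizer of
`q ↦ log(1+γq)/(q+ε)` on `q ≥ 0`. -/
lemma ee_max_at (γ ε p : ℝ) (hγ : 0 < γ) (hε : 0 < ε) (hp : 0 < p)
    (he : (1 / γ + p) * Real.log (1 + γ * p) = p + ε) :
    ∀ q : ℝ, 0 ≤ q →
      Real.log (1 + γ * q) / (q + ε) ≤ Real.log (1 + γ * p) / (p + ε) := by
  have h1p : (0:ℝ) < 1 + γ * p := by positivity
  have hpe : (0:ℝ) < p + ε := by positivity
  have hL : Real.log (1 + γ * p) = γ * (p + ε) / (1 + γ * p) := by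
    rw [eq_div_iff (ne_of_gt h1p)]
    have hγ' : γ ≠ 0 := ne_of_gt hγ
    field_simp at he
    nlinarith [he]
  intro q hq
  have h1q : (0:ℝ) < 1 + γ * q := by positivity
  have hqe : (0:ℝ) < q + ε := by positivity
  rw [div_le_div_iff₀ hqe hpe]
  -- goal: log(1+γq) * (p+ε) ≤ log(1+γp) * (q+ε)
  have hlog : Real.log ((1 + γ * q) / (1 + γ * p)) ≤ (1 + γ * q) / (1 + γ * p) - 1 :=
    Real.log_le_sub_one_of_pos (by positivity)
  rw [Real.log_div (ne_of_gt h1q) (ne_of_gt h1p)] at hlog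
  have key : Real.log (1 + γ * q) ≤ γ * (q + ε) / (1 + γ * p) := by
    have h1 : (1 + γ * q) / (1 + γ * p) - 1 = γ * (q - p) / (1 + γ * p) := by
      field_simp; ring
    rw [h1] at hlog
    have h2 : γ * (p + ε) / (1 + γ * p) + γ * (q - p) / (1 + γ * p)
        = γ * (q + ε) / (1 + γ * p) := by ring
    linarith [hlog, hL, h2]
  have h3 : γ * (q + ε) / (1 + γ * p) * (p + ε) = Real.log (1 + γ * p) * (q + ε) := by
    rw [hL]; ring
  calc Real.log (1 + γ * q) * (p + ε) ≤ γ * (q + ε) / (1 + γ * p) * (p + ε) :=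
        mul_le_mul_of_nonneg_right key (le_of_lt hpe)
    _ = Real.log (1 + γ * p) * (q + ε) := h3

/-- The maximum energy efficiency `log(1 + γ p*(γ,ε))/(p*(γ,ε)+ε)` is strictly
increasing in the channel gain `γ`; equivalently the supremum over `p ≥ 0` of
`log(1+γp)/(p+ε)` is strictly increasing in `γ`. -/
theorem max_energy_efficiency_strictMono (γ₁ γ₂ ε p₁ p₂ : ℝ)
    (hγ₂ : 0 < γ₂) (hγ : γ₂ < γ₁) (hε : 0 < ε)
    (hp₁ : 0 < p₁) (he₁ : (1 / γ₁ + p₁) * Real.log (1 + γ₁ * p₁) = p₁ + ε)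
    (hp₂ : 0 < p₂) (he₂ : (1 / γ₂ + p₂) * Real.log (1 + γ₂ * p₂) = p₂ + ε) :
    Real.log (1 + γ₁ * p₁) / (p₁ + ε) > Real.log (1 + γ₂ * p₂) / (p₂ + ε) ∧
    sSup ((fun p : ℝ => Real.log (1 + γ₁ * p) / (p + ε)) '' Set.Ici 0)
      > sSup ((fun p : ℝ => Real.log (1 + γ₂ * p) / (p + ε)) '' Set.Ici 0) := by
  have hγ₁ : 0 < γ₁ := lt_trans hγ₂ hγ
  have hmax₁ := ee_max_at γ₁ ε p₁ hγ₁ hε hp₁ he₁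
  have hmax₂ := ee_max_at γ₂ ε p₂ hγ₂ hε hp₂ he₂
  have hstrict : Real.log (1 + γ₂ * p₂) / (p₂ + ε) < Real.log (1 + γ₁ * p₂) / (p₂ + ε) := by
    have : Real.log (1 + γ₂ * p₂) < Real.log (1 + γ₁ * p₂) := by
      apply Real.log_lt_log (by positivity)
      nlinarith
    exact (div_lt_div_iff_of_pos_right (by positivity)).mpr this
  have hfirst : Real.log (1 + γ₁ * p₁) / (p₁ + ε) > Real.log (1 + γ₂ * p₂) / (p₂ + ε) :=
    lt_of_lt_of_le hstrict (hmax₁ p₂ (le_of_lt hp₂))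
  refine ⟨hfirst, ?_⟩
  have hs₁ : sSup ((fun p : ℝ => Real.log (1 + γ₁ * p) / (p + ε)) '' Set.Ici 0)
      = Real.log (1 + γ₁ * p₁) / (p₁ + ε) := by
    apply IsGreatest.csSup_eq
    constructor
    · exact ⟨p₁, le_of_lt hp₁, rfl⟩
    · rintro _ ⟨q, hq, rfl⟩; exact hmax₁ q hq
  have hs₂ : sSup ((fun p : ℝ => Real.log (1 + γ₂ * p) / (p + ε)) '' Set.Ici 0)
      = Real.log (1 + γ₂ * p₂) / (p₂ + ε) := by
    apply IsGreatest.csSup_eq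
    constructor
    · exact ⟨p₂, le_of_lt hp₂, rfl⟩
    · rintro _ ⟨q, hq, rfl⟩; exact hmax₂ q hq
  rw [hs₁, hs₂]
  exact hfirst
end
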